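/- arXiv:1804.05758 — 7 statements merged into one kernel-verified Lean document; each statement's English description precedes it below -/
import Mathlib

section
/- Let κ ≤ λ be infinite cardinals with κ regular and λ^{<κ} = λ. Then there is a family I of subsets of λ with |I| = 2^λ such that for every pair of disjoint subfamilies A, B ⊆ I with |A| < κ, |B| < κ and A ≠ ∅, the set (⋂_{X∈A} X) \ (⋃_{Y∈B} Y) has cardinality exactly λ. -/
/-! Hausdorff's construction. Since `#α ^< κ = #α`, there are `#α` pairs `(s, F)` with `s` a
subset of `α` of size `< κ` and `F` a family of `< κ` such subsets, so these pairs may replace the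
points of `α`. To `X ⊆ α` attach the set of pairs with `X ∩ s ∈ F`. For disjoint `𝒜, ℬ` of size
`< κ` there is an `s₀` of size `< κ` meeting every `X ∆ Y` with `X ∈ 𝒜`, `Y ∈ ℬ`; then for each of
the `#α` points `x ∉ s₀` the pair `(s, {X ∩ s | X ∈ 𝒜})` with `s = insert x s₀` lies in the sets
attached to members of `𝒜` and in none attached to members of `ℬ`. -/

open Cardinal Set

open scoped symmDiff

universe u

namespace Cardinal

variable {α : Type u} {κ : Cardinal.{u}}

theorem mk_setOf_mk_lt_le_mul_powerlt [Infinite α] :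
    #{s : Set α | #s < κ} ≤ κ * #α ^< κ := by
  let bound : κ.ord.ToType → Cardinal.{u} := fun i => (Ordinal.ToType.mk.symm i).1.card
  have hcover : {s : Set α | #s < κ} ⊆ ⋃ i, {s : Set α | #s ≤ bound i} := fun s hs =>
    mem_iUnion.2 ⟨Ordinal.ToType.mk ⟨(#s).ord, ord_lt_ord.2 hs⟩, by simp [bound]⟩
  calc #{s : Set α | #s < κ} ≤ #(⋃ i, {s : Set α | #s ≤ bound i}) := mk_le_mk_of_subset hcover
    _ ≤ #κ.ord.ToType * ⨆ i, #{s : Set α | #s ≤ bound i} := mk_iUnion_le _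
    _ ≤ κ * #α ^< κ := by
      rw [mk_toType, card_ord]
      refine mul_le_mul_right (ciSup_le' fun i => ?_) κ
      exact (mk_bounded_set_le_of_infinite α _).trans
        (le_powerlt _ (lt_ord.1 (mem_Iio.1 (Ordinal.ToType.mk.symm i).2)))

theorem mk_setOf_mk_lt (hκ : ℵ₀ ≤ κ) (hκα : κ ≤ #α) (hpow : #α ^< κ = #α) :
    #{s : Set α | #s < κ} = #α := by
  have hα : ℵ₀ ≤ #α := hκ.trans hκα
  have := infinite_iff.2 hα
  refine le_antisymm ?_ ?_
  · calc #{s : Set α | #s < κ} ≤ κ * #α ^< κ := mk_setOf_mk_lt_le_mul_powerlt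
      _ = #α := by rw [hpow, mul_eq_max hκ hα, max_eq_right hκα]
  · refine mk_le_of_injective (f := fun x => (⟨{x}, ?_⟩ : {s : Set α | #s < κ}))
      fun x y h => singleton_injective (congrArg Subtype.val h)
    exact (mk_singleton x).trans_lt (one_lt_aleph0.trans_le hκ)

end Cardinal

section HausdorffFamily

variable {α : Type u} {κ : Cardinal.{u}}

variable (α κ) in
abbrev HausdorffPoint : Type u := {s : Set α | #s < κ} × {F : Set {s : Set α | #s < κ} | #F < κ}

variable (κ) in
def hausdorffSet (X : Set α) : Set (HausdorffPoint α κ) := {p | X ∩ p.1 ∈ Subtype.val '' p.2.1}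

def HausdorffPoint.trace (s : Set α) (hs : #s < κ) (𝒜 : Set (Set α)) (h𝒜 : #𝒜 < κ) :
    HausdorffPoint α κ :=
  (⟨s, hs⟩, ⟨(fun X => ⟨X ∩ s, (mk_le_mk_of_subset inter_subset_right).trans_lt hs⟩) '' 𝒜,
    mk_image_le.trans_lt h𝒜⟩)

theorem mk_hausdorffPoint (hκ : ℵ₀ ≤ κ) (hκα : κ ≤ #α) (hpow : #α ^< κ = #α) :
    #(HausdorffPoint α κ) = #α := by
  have hsmall := mk_setOf_mk_lt hκ hκα hpow
  rw [mk_prod, lift_id, lift_id, mk_setOf_mk_lt (α := {s : Set α | #s < κ}) hκ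
    (by rwa [hsmall]) (by rwa [hsmall]), hsmall, mul_eq_self (hκ.trans hκα)]

theorem HausdorffPoint.trace_mem_hausdorffSet {s : Set α} (hs : #s < κ) {𝒜 : Set (Set α)}
    (h𝒜 : #𝒜 < κ) {X : Set α} (hX : X ∈ 𝒜) : HausdorffPoint.trace s hs 𝒜 h𝒜 ∈ hausdorffSet κ X :=
  ⟨_, mem_image_of_mem _ hX, rfl⟩

theorem HausdorffPoint.trace_notMem_hausdorffSet {s : Set α} (hs : #s < κ) {𝒜 : Set (Set α)}
    (h𝒜 : #𝒜 < κ) {Y : Set α} (hY : ∀ X ∈ 𝒜, (X ∆ Y ∩ s).Nonempty) :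
    HausdorffPoint.trace s hs 𝒜 h𝒜 ∉ hausdorffSet κ Y := by
  rintro ⟨_, ⟨X, hX, rfl⟩, hXY⟩
  have hXY : X ∩ s = Y ∩ s := hXY
  simpa [inter_symmDiff_distrib_right, hXY] using hY X hX

theorem exists_mk_lt_forall_symmDiff_inter_nonempty (hκ : ℵ₀ ≤ κ) {𝒜 ℬ : Set (Set α)}
    (h𝒜 : #𝒜 < κ) (hℬ : #ℬ < κ) (hdisj : Disjoint 𝒜 ℬ) :
    ∃ s : Set α, #s < κ ∧ ∀ X ∈ 𝒜, ∀ Y ∈ ℬ, (X ∆ Y ∩ s).Nonempty := by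
  have hne (X : 𝒜) (Y : ℬ) : (X.1 ∆ Y.1).Nonempty :=
    symmDiff_nonempty.2 fun h => disjoint_left.1 hdisj X.2 (h ▸ Y.2)
  choose z hz using hne
  refine ⟨range fun XY : 𝒜 × ℬ => z XY.1 XY.2, ?_, fun X hX Y hY => ?_⟩
  · refine mk_range_le.trans_lt ?_
    rw [mk_prod, lift_id, lift_id]
    exact mul_lt_of_lt hκ h𝒜 hℬ
  · exact ⟨z ⟨X, hX⟩ ⟨Y, hY⟩, hz ⟨X, hX⟩ ⟨Y, hY⟩, (⟨X, hX⟩, ⟨Y, hY⟩), rfl⟩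

variable (κ) in
theorem hausdorffSet_injective (hκ : ℵ₀ ≤ κ) : Function.Injective (hausdorffSet (α := α) κ) := by
  intro X Y hXY
  by_contra hne
  obtain ⟨z, hz⟩ := symmDiff_nonempty.2 hne
  have hone : ∀ {β : Type u} (b : β), #({b} : Set β) < κ := fun b =>
    (mk_singleton b).trans_lt (one_lt_aleph0.trans_le hκ)
  have hX := HausdorffPoint.trace_mem_hausdorffSet (hone z) (hone X) (mem_singleton X)
  refine HausdorffPoint.trace_notMem_hausdorffSet (hone z) (hone X) (Y := Y) ?_ (hXY ▸ hX)
  rintro _ rfl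
  exact ⟨z, hz, rfl⟩

theorem mk_biInter_hausdorffSet_sdiff_biUnion (hκ : ℵ₀ ≤ κ) (hκα : κ ≤ #α)
    (hpow : #α ^< κ = #α) {𝒜 ℬ : Set (Set α)} (h𝒜 : #𝒜 < κ) (hℬ : #ℬ < κ) (hdisj : Disjoint 𝒜 ℬ) :
    #((⋂ X ∈ 𝒜, hausdorffSet κ X) \ ⋃ Y ∈ ℬ, hausdorffSet κ Y : Set (HausdorffPoint α κ)) =
      #α := by
  have := infinite_iff.2 (hκ.trans hκα)
  obtain ⟨s₀, hs₀, hsep⟩ := exists_mk_lt_forall_symmDiff_inter_nonempty hκ h𝒜 hℬ hdisj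
  have hins (x : α) : #(insert x s₀ : Set α) < κ :=
    (mk_insert_le ..).trans_lt (add_one_lt_of_lt hκ hs₀)
  let f : α → HausdorffPoint α κ := fun x => HausdorffPoint.trace (insert x s₀) (hins x) 𝒜 h𝒜
  have hf : InjOn f s₀ᶜ := fun x hx y _ hxy => by
    have hxy : insert x s₀ = insert y s₀ := congrArg (fun p : HausdorffPoint α κ => p.1.1) hxy
    exact (mem_insert_iff.1 (hxy ▸ mem_insert x s₀)).resolve_right hx
  have hmaps : f '' s₀ᶜ ⊆ (⋂ X ∈ 𝒜, hausdorffSet κ X) \ ⋃ Y ∈ ℬ, hausdorffSet κ Y := by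
    rintro _ ⟨x, -, rfl⟩
    simp only [mem_sdiff, mem_iInter₂, mem_iUnion₂, not_exists]
    refine ⟨fun X hX => HausdorffPoint.trace_mem_hausdorffSet _ _ hX, fun Y hY => ?_⟩
    exact HausdorffPoint.trace_notMem_hausdorffSet _ _ fun X hX =>
      (hsep X hX Y hY).mono (inter_subset_inter_right _ (subset_insert x s₀))
  refine le_antisymm ((mk_set_le _).trans (mk_hausdorffPoint hκ hκα hpow).le) ?_
  calc #α = #(s₀ᶜ : Set α) := (mk_compl_of_infinite s₀ (hs₀.trans_le hκα)).symm
    _ = #(f '' s₀ᶜ) := (mk_image_eq_of_injOn f _ hf).symm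
    _ ≤ _ := mk_le_mk_of_subset hmaps

end HausdorffFamily

theorem statement0_general {α : Type u} (κ : Cardinal.{u})
    (hinf : ℵ₀ ≤ κ) (hka : κ ≤ #α)
    (hpow : #α ^< κ = #α) :
    ∃ I : Set (Set α), #I = 2 ^ #α ∧
      ∀ A B : Set (Set α), A ⊆ I → B ⊆ I → Disjoint A B →
        #A < κ → #B < κ → A.Nonempty →
          #(⋂₀ A \ ⋃₀ B : Set α) = #α := by
  obtain ⟨e⟩ : Nonempty (α ≃ HausdorffPoint α κ) :=
    Cardinal.eq.1 (mk_hausdorffPoint hinf hka hpow).symm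
  let S : Set α → Set α := fun X => e ⁻¹' hausdorffSet κ X
  have hS : Function.Injective S :=
    (preimage_injective.2 e.surjective).comp (hausdorffSet_injective κ hinf)
  refine ⟨range S, by rw [mk_range_eq S hS, mk_set], ?_⟩
  intro A B hA hB hdisj hAκ hBκ _
  obtain ⟨𝒜, rfl⟩ := subset_range_iff_exists_image_eq.1 hA
  obtain ⟨ℬ, rfl⟩ := subset_range_iff_exists_image_eq.1 hB
  rw [mk_image_eq hS] at hAκ hBκ
  rw [disjoint_image_iff hS] at hdisj
  have hcell : ⋂₀ (S '' 𝒜) \ ⋃₀ (S '' ℬ) =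
      e ⁻¹' ((⋂ X ∈ 𝒜, hausdorffSet κ X) \ ⋃ Y ∈ ℬ, hausdorffSet κ Y) := by
    simp only [S, sInter_image, sUnion_image, preimage_sdiff, preimage_iInter₂, preimage_iUnion₂]
  rw [hcell, mk_preimage_equiv, mk_biInter_hausdorffSet_sdiff_biUnion hinf hka hpow hAκ hBκ hdisj]

/-- **Fichtenholz–Kantorovich–Hausdorff lemma.**
Let `κ ≤ lam` be infinite cardinals with `κ` regular and `lam ^< κ = lam` (the set of size
`lam` is represented by a type `α` of cardinality `lam`).  Then there is a family `I` of
subsets of `α` with `|I| = 2 ^ lam` which is `κ`-independent: for all disjoint subfamilies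
`A, B ⊆ I` with `|A|, |B| < κ` and `A ≠ ∅`, the set `(⋂ A) \ (⋃ B)` has cardinality
exactly `lam`. -/
theorem statement0 {α : Type u} (κ : Cardinal.{u})
    (hreg : κ.IsRegular) (hinf : ℵ₀ ≤ κ) (hainf : ℵ₀ ≤ #α) (hka : κ ≤ #α)
    (hpow : #α ^< κ = #α) :
    ∃ I : Set (Set α), #I = 2 ^ #α ∧
      ∀ A B : Set (Set α), A ⊆ I → B ⊆ I → Disjoint A B →
        #A < κ → #B < κ → A.Nonempty →
          #(⋂₀ A \ ⋃₀ B : Set α) = #α :=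
  statement0_general κ hinf hka hpow
end

section
/- Let κ ≤ λ be infinite cardinals with κ regular and λ^{<κ} = λ. Let J = {⟨X, Z⟩ : X ⊆ λ, |X| < κ, Z ⊆ 𝒫(X), |Z| < κ}, and for each A ⊆ λ let I(A) = {⟨X, Z⟩ ∈ J : A ∩ X ∈ Z}. Then |J| = λ, the map A ↦ I(A) is injective on 𝒫(λ), and the family {I(A) : A ⊆ λ} is a κ-independent family of subsets of J of cardinality 2^λ: for disjoint subfamilies {I(A_α) : α < ρ} and {I(B_β) : β < ζ} with ρ, ζ < κ, A_α ≠ B_β for all α, β, and with the convention that the empty intersection equals J, the set (⋂_{α<ρ} I(A_α)) \ (⋃_{β<ζ} I(B_β)) has cardinality λ. -/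
/-!
Sets of size `< κ` in a set of size `λ` number at most `λ ^< κ = λ`, and applying this twice
bounds `|J|`. For independence, pick a point of `A i ∆ B j` for every pair `(i, j)`; these
fewer than `κ` points form a set `X₀`. For `X = insert y X₀` the traces `A i ∩ X` all differ
from every `B j ∩ X`, so `(X, {A i ∩ X | i})` lies in every `I(A i)` and in no `I(B j)`;
the `λ` choices of `y ∉ X₀` give `λ` distinct such points.
-/

open Cardinal

/-- The set `J = {⟨X, Z⟩ : X ⊆ lam, |X| < κ, Z ⊆ 𝒫(X), |Z| < κ}`, where the underlying
set of size `lam` is represented by the type `α`. -/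
def Jset (κ : Cardinal.{u}) (α : Type u) : Set (Set α × Set (Set α)) :=
  {p | #p.1 < κ ∧ p.2 ⊆ 𝒫 p.1 ∧ #p.2 < κ}

/-- For `A ⊆ lam`, the set `I(A) = {⟨X, Z⟩ ∈ J : A ∩ X ∈ Z}`. -/
def Iset (κ : Cardinal.{u}) {α : Type u} (A : Set α) : Set (Set α × Set (Set α)) :=
  {p ∈ Jset κ α | A ∩ p.1 ∈ p.2}

open Set

namespace Cardinal

lemma exists_mk_Iio_toType_ord_eq {κ c : Cardinal.{u}} (hc : c < κ) :
    ∃ i : κ.ord.ToType, #(Iio i) = c := by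
  obtain ⟨i, hi⟩ := @Ordinal.typein_surj κ.ord.ToType (· < ·) isWellOrder_lt c.ord
    (by rwa [Ordinal.type_toType, ord_lt_ord])
  have h := @Ordinal.card_typein κ.ord.ToType (· < ·) isWellOrder_lt i
  exact ⟨i, by rwa [hi, card_ord, eq_comm] at h⟩

lemma mk_setOf_subset_mk_lt_le {β : Type u} {κ lam : Cardinal.{u}} (S : Set β)
    (hS : #S ≤ lam) (hlam : ℵ₀ ≤ lam) (hκlam : κ ≤ lam) (hpow : lam ^< κ = lam) :
    #{t : Set β | t ⊆ S ∧ #t < κ} ≤ lam := by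
  have cover : {t : Set β | t ⊆ S ∧ #t < κ} ⊆
      ⋃ i : κ.ord.ToType, {t | t ⊆ S ∧ #t ≤ #(Iio i)} := by
    rintro t ⟨htS, ht⟩
    obtain ⟨i, hi⟩ := exists_mk_Iio_toType_ord_eq ht
    exact mem_iUnion.2 ⟨i, htS, hi.ge⟩
  have piece (i : κ.ord.ToType) : #{t : Set β | t ⊆ S ∧ #t ≤ #(Iio i)} ≤ lam :=
    calc _ ≤ max #S ℵ₀ ^ #(Iio i) := mk_bounded_subset_le S _
      _ ≤ lam ^ #(Iio i) := power_le_power_right (max_le hS hlam)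
      _ ≤ lam ^< κ := le_powerlt lam (by simpa using mk_Iio_lt i (by simp))
      _ = lam := hpow
  calc _ ≤ #κ.ord.ToType * ⨆ i, #{t : Set β | t ⊆ S ∧ #t ≤ #(Iio i)} :=
        (mk_le_mk_of_subset cover).trans (mk_iUnion_le _)
    _ ≤ lam * lam := mul_le_mul' ((mk_ord_toType κ).trans_le hκlam) (ciSup_le' piece)
    _ = lam := mul_eq_self hlam

end Cardinal

section IndependentFamily

variable {α : Type u} {κ : Cardinal.{u}}

lemma mk_Jset_le (hα : ℵ₀ ≤ #α) (hκα : κ ≤ #α) (hpow : #α ^< κ = #α) :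
    #(Jset κ α) ≤ #α := by
  set small := {X : Set α | X ⊆ univ ∧ #X < κ}
  have hsmall : #small ≤ #α := mk_setOf_subset_mk_lt_le _ mk_univ.le hα hκα hpow
  have hJ : Jset κ α ⊆ small ×ˢ {Z | Z ⊆ small ∧ #Z < κ} := by
    rintro ⟨X, Z⟩ ⟨hX, hZX, hZ⟩
    exact ⟨⟨subset_univ X, hX⟩,
      fun s hs => ⟨subset_univ s, (mk_le_mk_of_subset (hZX hs)).trans_lt hX⟩, hZ⟩
  calc _ ≤ _ := mk_le_mk_of_subset hJ
    _ = _ := mk_setProd _ _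
    _ ≤ #α * #α := mul_le_mul' hsmall (mk_setOf_subset_mk_lt_le _ hsmall hα hκα hpow)
    _ = #α := mul_eq_self hα

lemma le_mk_Jset (hκ : 1 < κ) : #α ≤ #(Jset κ α) :=
  calc #α = #(range fun x : α => (({x} : Set α), (∅ : Set (Set α)))) :=
        (mk_range_eq _ fun x y h => by simpa using congrArg Prod.fst h).symm
    _ ≤ _ := mk_le_mk_of_subset <| by
        rintro _ ⟨x, rfl⟩
        exact ⟨by simpa using hκ, by simp, by simpa using zero_lt_one.trans hκ⟩

lemma Iset_injective (hκ : 1 < κ) : Function.Injective (Iset κ : Set α → _) := by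
  intro A B h
  ext z
  have hA : (({z}, {A ∩ {z}}) : Set α × Set (Set α)) ∈ Iset κ A :=
    ⟨⟨by simpa using hκ, by simp, by simpa using hκ⟩, rfl⟩
  have hB : B ∩ {z} = A ∩ {z} := (h ▸ hA).2
  simpa using (Set.ext_iff.1 hB z).symm

lemma exists_small_separating_set {ιA ιB : Type u} {A : ιA → Set α} {B : ιB → Set α}
    (hκ : ℵ₀ ≤ κ) (hA : #ιA < κ) (hB : #ιB < κ) (hAB : ∀ i j, A i ≠ B j) :
    ∃ X : Set α, #X < κ ∧ ∀ i j, A i ∩ X ≠ B j ∩ X := by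
  choose x hx using fun ij : ιA × ιB => symmDiff_nonempty.2 (hAB ij.1 ij.2)
  refine ⟨range x, mk_range_le.trans_lt ?_, fun i j h => ?_⟩
  · simpa using mul_lt_of_lt hκ hA hB
  · have hmem : x (i, j) ∈ symmDiff (A i ∩ range x) (B j ∩ range x) := by
      rw [← inter_symmDiff_distrib_right]
      exact ⟨hx (i, j), (i, j), rfl⟩
    rwa [h, symmDiff_self] at hmem

lemma traces_mem_sdiff {ιA ιB : Type u} {A : ιA → Set α} {B : ιB → Set α} {X : Set α}
    (hA : #ιA < κ) (hX : #X < κ) (hsep : ∀ i j, A i ∩ X ≠ B j ∩ X) :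
    (X, range fun i => A i ∩ X) ∈ (Jset κ α ∩ ⋂ i, Iset κ (A i)) \ ⋃ j, Iset κ (B j) := by
  have hJ : (X, range fun i => A i ∩ X) ∈ Jset κ α :=
    ⟨hX, by rintro _ ⟨i, rfl⟩; exact inter_subset_right, mk_range_le.trans_lt hA⟩
  refine ⟨⟨hJ, mem_iInter.2 fun i => ⟨hJ, i, rfl⟩⟩, ?_⟩
  simp only [mem_iUnion, not_exists]
  rintro j ⟨-, i, hi⟩
  exact hsep i j hi

lemma mk_Iset_sdiff_eq {ιA ιB : Type u} {A : ιA → Set α} {B : ιB → Set α}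
    (hκ : ℵ₀ ≤ κ) (hα : ℵ₀ ≤ #α) (hκα : κ ≤ #α) (hpow : #α ^< κ = #α)
    (hA : #ιA < κ) (hB : #ιB < κ) (hAB : ∀ i j, A i ≠ B j) :
    #((Jset κ α ∩ ⋂ i, Iset κ (A i)) \ ⋃ j, Iset κ (B j) : Set _) = #α := by
  have : Infinite α := infinite_iff.2 hα
  obtain ⟨X, hX, hsep⟩ := exists_small_separating_set hκ hA hB hAB
  refine le_antisymm
    ((mk_le_mk_of_subset (sdiff_subset.trans inter_subset_left)).trans (mk_Jset_le hα hκα hpow)) ?_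
  let f : α → Set α × Set (Set α) := fun y => (insert y X, range fun i => A i ∩ insert y X)
  have hf : InjOn f Xᶜ := fun y hy y' _ h => (insert_inj hy).1 (congrArg Prod.fst h)
  have hfD : f '' Xᶜ ⊆ (Jset κ α ∩ ⋂ i, Iset κ (A i)) \ ⋃ j, Iset κ (B j) := by
    rintro _ ⟨y, hy, rfl⟩
    refine traces_mem_sdiff hA ?_ fun i j h => hsep i j ?_
    · exact (mk_insert_le).trans_lt (add_lt_of_lt hκ hX (one_lt_aleph0.trans_le hκ))
    · rw [← inter_eq_right.2 (subset_insert y X), ← inter_assoc, h, inter_assoc]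
  calc #α = #(Xᶜ : Set α) := (mk_compl_of_infinite X (hX.trans_le hκα)).symm
    _ = #(f '' Xᶜ) := (mk_image_eq_of_injOn f _ hf).symm
    _ ≤ _ := mk_le_mk_of_subset hfD

end IndependentFamily

theorem statement1_general {α : Type u} (κ : Cardinal.{u})
    (hinf : ℵ₀ ≤ κ) (hainf : ℵ₀ ≤ #α) (hka : κ ≤ #α)
    (hpow : #α ^< κ = #α) :
    #(Jset κ α) = #α ∧
    Function.Injective (fun A : Set α => Iset κ A) ∧
    #(Set.range fun A : Set α => Iset κ A) = 2 ^ #α ∧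
    ∀ (ιA ιB : Type u) (A : ιA → Set α) (B : ιB → Set α),
      #ιA < κ → #ιB < κ → (∀ i j, A i ≠ B j) →
        #(((Jset κ α ∩ ⋂ i, Iset κ (A i)) \ ⋃ j, Iset κ (B j) :
            Set (Set α × Set (Set α)))) = #α := by
  have hone : 1 < κ := one_lt_aleph0.trans_le hinf
  refine ⟨(mk_Jset_le hainf hka hpow).antisymm (le_mk_Jset hone), Iset_injective hone, ?_,
    fun _ _ _ _ hA hB hAB => mk_Iset_sdiff_eq hinf hainf hka hpow hA hB hAB⟩
  rw [mk_range_eq _ (Iset_injective hone), mk_set]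

/-- Let `κ ≤ lam` be infinite cardinals with `κ` regular and `lam ^< κ = lam`.  Then
`|J| = lam`, the map `A ↦ I(A)` is injective, the family `{I(A) : A ⊆ lam}` has
cardinality `2 ^ lam`, and it is `κ`-independent as a family of subsets of `J`:
for disjoint subfamilies `{I(A i)}` and `{I(B i)}` of size `< κ` (i.e. `A i ≠ B j`
for all `i, j`), with the convention that the empty intersection is `J`, the set
`(J ∩ ⋂ i, I(A i)) \ ⋃ j, I(B j)` has cardinality `lam`. -/
theorem statement1 {α : Type u} (κ : Cardinal.{u})
    (hreg : κ.IsRegular) (hinf : ℵ₀ ≤ κ) (hainf : ℵ₀ ≤ #α) (hka : κ ≤ #α)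
    (hpow : #α ^< κ = #α) :
    #(Jset κ α) = #α ∧
    Function.Injective (fun A : Set α => Iset κ A) ∧
    #(Set.range fun A : Set α => Iset κ A) = 2 ^ #α ∧
    ∀ (ιA ιB : Type u) (A : ιA → Set α) (B : ιB → Set α),
      #ιA < κ → #ιB < κ → (∀ i j, A i ≠ B j) →
        #(((Jset κ α ∩ ⋂ i, Iset κ (A i)) \ ⋃ j, Iset κ (B j) :
            Set (Set α × Set (Set α)))) = #α :=
  statement1_general κ hinf hainf hka hpow
end

section
/- Let κ ≤ λ be infinite cardinals with κ regular and uncountable, and let ⟨A_δ : δ < 2^λ⟩ be a κ-independent family of subsets of λ (for every Γ ⊆ 2^λ with |Γ| < κ and every s : Γ → {0,1}, the set A(s) = (⋂_{α∈Γ, s(α)=1} A_α) \ (⋃_{β∈Γ, s(β)=0} A_β) is nonempty). Define ι on L_{κ,1} propositional formulas over the variables {a_δ : δ < 2^λ} recursively by ι(a_δ) = A_δ, ι(¬φ) = λ \ ι(φ), and ι(⋀_{i<η} φ_i) = ⋂_{i<η} ι(φ_i). For a formula φ let Γ_φ be the set of indices of variables occurring in φ, and for s : Γ → {0,1} with Γ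 ⊇ Γ_φ let s(φ) ∈ {0,1} be the truth value of φ under the assignment s. Then for every formula φ and every Γ ⊇ Γ_φ with |Γ| < κ, ι(φ) = ⋃{A(s) : s ∈ {0,1}^Γ, s(φ) = 1}. -/
open Cardinal

/-- Propositional formulas of the logic `L_{κ,1}` over a set `V` of propositional
variables: the least class containing the variables and closed under negation and
under conjunctions (here of arbitrary index type; the size restriction `< κ` is the
predicate `PropForm.Small` below). -/
inductive PropForm (V : Type u) : Type (u + 1)
  | var : V → PropForm V
  | neg : PropForm V → PropForm V
  | conj : (ι : Type u) → (ι → PropForm V) → PropForm V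

namespace PropForm

/-- A formula is in `L_{κ,1}` when all of its conjunctions have fewer than `κ` conjuncts. -/
def Small (κ : Cardinal.{u}) {V : Type u} : PropForm V → Prop
  | var _ => True
  | neg φ => φ.Small κ
  | conj ι f => #ι < κ ∧ ∀ i, (f i).Small κ

/-- The set of propositional variables occurring in a formula. -/
def vars {V : Type u} : PropForm V → Set V
  | var x => {x}
  | neg φ => φ.vars
  | conj _ f => ⋃ i, (f i).vars

/-- Truth of a formula under a (total) truth assignment `v : V → Bool`, evaluated
recursively; a conjunction is true iff all conjuncts are true. -/
def Sat {V : Type u} (v : V → Bool) : PropForm V → Prop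
  | var x => v x = true
  | neg φ => ¬ φ.Sat v
  | conj _ f => ∀ i, (f i).Sat v

/-- Truth of a formula under a partial truth assignment `s : Γ → Bool`; this is the
truth value `s(φ)` when all variables of `φ` lie in `Γ`. -/
def SatOn {V : Type u} {Γ : Set V} (s : Γ → Bool) : PropForm V → Prop
  | var x => ∃ h : x ∈ Γ, s ⟨x, h⟩ = true
  | neg φ => ¬ φ.SatOn s
  | conj _ f => ∀ i, (f i).SatOn s

/-- The interpretation map `ι` sending a propositional formula to a subset of `α`,
determined by `ι(a δ) = A δ`, `ι(¬φ) = α \ ι(φ)`, and `ι(⋀ᵢ φᵢ) = ⋂ᵢ ι(φᵢ)`. -/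
def interp {V α : Type u} (A : V → Set α) : PropForm V → Set α
  | var x => A x
  | neg φ => (φ.interp A)ᶜ
  | conj _ f => ⋂ i, (f i).interp A

end PropForm

/-- For a family `A : V → Set α`, `Γ ⊆ V`, and `s : Γ → Bool`, the set
`A(s) = (⋂_{γ ∈ Γ, s γ = 1} A γ) \ (⋃_{γ ∈ Γ, s γ = 0} A γ)`, with the convention that
the empty intersection is all of `α`. -/
def Aset {V α : Type u} (A : V → Set α) (Γ : Set V) (s : Γ → Bool) : Set α :=
  (⋂ γ : {g : Γ // s g = true}, A γ.1.1) \ (⋃ γ : {g : Γ // s g = false}, A γ.1.1)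

/-! Write `χₓ : γ ↦ [x ∈ A γ]` for the characteristic assignment of a point `x`. The sets
`A(s)`, `s : Γ → Bool`, are the fibres of `x ↦ χₓ|Γ`, and `x ∈ ι(φ)` holds exactly when `χₓ`
satisfies `φ`, which only depends on `χₓ|Γ`. So `ι(φ)` is the union of the fibres over the
assignments satisfying `φ`. -/

namespace PropForm

variable {V α : Type u}

theorem mem_interp_iff_sat (A : V → Set α) (x : α) (φ : PropForm V) :
    x ∈ φ.interp A ↔ φ.Sat (fun v => (A v).boolIndicator x) := by
  induction φ with
  | var v => exact (A v).mem_iff_boolIndicator x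
  | neg φ ih => exact ih.not
  | conj ι f ih => simpa only [interp, Sat, Set.mem_iInter] using forall_congr' ih

theorem satOn_domRestrict_iff {Γ : Set V} (v : V → Bool) {φ : PropForm V} (hφ : φ.vars ⊆ Γ) :
    φ.SatOn (Γ.domRestrict v) ↔ φ.Sat v := by
  induction φ with
  | var x => exact ⟨fun ⟨_, h⟩ => h, fun h => ⟨hφ rfl, h⟩⟩
  | neg φ ih => exact (ih hφ).not
  | conj ι f ih => exact forall_congr' fun i => ih i ((Set.subset_iUnion _ i).trans hφ)

end PropForm

theorem mem_Aset_iff {V α : Type u} (A : V → Set α) (Γ : Set V) (s : Γ → Bool) (x : α) :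
    x ∈ Aset A Γ s ↔ s = Γ.domRestrict (fun v => (A v).boolIndicator x) := by
  rw [funext_iff, Aset, Set.mem_sdiff, Set.mem_iInter, Set.mem_iUnion, not_exists]
  refine ⟨fun ⟨hin, hout⟩ γ => ?_, fun h => ⟨fun γ => ?_, fun γ => ?_⟩⟩
  · cases hs : s γ
    · exact ((Set.notMem_iff_boolIndicator _ x).1 (hout ⟨γ, hs⟩)).symm
    · exact ((Set.mem_iff_boolIndicator _ x).1 (hin ⟨γ, hs⟩)).symm
  · exact (Set.mem_iff_boolIndicator _ x).2 ((h γ).symm.trans γ.2)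
  · exact (Set.notMem_iff_boolIndicator _ x).2 ((h γ).symm.trans γ.2)

theorem statement3_general {V α : Type u} (A : V → Set α)
    (φ : PropForm V)
    (Γ : Set V) (hΓφ : φ.vars ⊆ Γ) :
    φ.interp A = ⋃ (s : Γ → Bool) (_ : φ.SatOn s), Aset A Γ s := by
  ext x
  simp only [Set.mem_iUnion, mem_Aset_iff, exists_prop, exists_eq_right]
  rw [PropForm.mem_interp_iff_sat, PropForm.satOn_domRestrict_iff _ hΓφ]

/-- Let `κ ≤ lam` be infinite cardinals with `κ` regular and uncountable, and let
`A : V → Set α` (with `|V| = 2 ^ lam`, `|α| = lam`) be a `κ`-independent family.  Then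
for every `L_{κ,1}` formula `φ` and every `Γ ⊇ vars φ` with `|Γ| < κ`,
`ι(φ) = ⋃ {A(s) : s : Γ → Bool, s(φ) = 1}`. -/
theorem statement3 {V α : Type u} (κ : Cardinal.{u})
    (hreg : κ.IsRegular) (hunc : ℵ₀ < κ) (hainf : ℵ₀ ≤ #α) (hka : κ ≤ #α)
    (hV : #V = 2 ^ #α) (A : V → Set α)
    (hind : ∀ (Γ : Set V), #Γ < κ → ∀ s : Γ → Bool, (Aset A Γ s).Nonempty)
    (φ : PropForm V) (hφ : φ.Small κ)
    (Γ : Set V) (hΓφ : φ.vars ⊆ Γ) (hΓ : #Γ < κ) :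
    φ.interp A = ⋃ (s : Γ → Bool) (_ : φ.SatOn s), Aset A Γ s :=
  statement3_general A φ Γ hΓφ
end

section
/- Let κ ≤ λ be infinite cardinals with κ regular and uncountable, let ⟨A_δ : δ < 2^λ⟩ be a κ-independent family of subsets of λ (for every Γ ⊆ 2^λ with |Γ| < κ and every s : Γ → {0,1}, the set A(s) = (⋂_{α∈Γ, s(α)=1} A_α) \ (⋃_{β∈Γ, s(β)=0} A_β) is nonempty), and let ι be defined on L_{κ,1} propositional formulas over the variables {a_δ : δ < 2^λ} by ι(a_δ) = A_δ, ι(¬φ) = λ \ ι(φ), ι(⋀_{i<η} φ_i) = ⋂_{i<η} ι(φ_i). Then a formula φ is satisfiable (some truth assignment makes φ true) if and only if ι(φ) ≠ ∅. Consequently, if φ ↔ ψ is a tautology then ι(φ) = ι(ψ). -/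
open Cardinal

/-! Each point `x : α` induces the truth assignment `δ ↦ [x ∈ A δ]`, under which a formula is true
exactly when `x` lies in its interpretation; so a nonempty interpretation gives a satisfying
assignment, and formulas with the same models have the same interpretation. Conversely, the truth
of `φ` depends only on its variables, of which there are fewer than `κ` by regularity, and
`κ`-independence provides a point inducing any prescribed assignment of those. -/

open Classical in
theorem decide_mem_eq_of_mem_Aset {V α : Type u} {A : V → Set α} {Γ : Set V} {s : Γ → Bool}
    {x : α} (hx : x ∈ Aset A Γ s) (γ : Γ) : decide (x ∈ A γ) = s γ := by
  obtain ⟨hx_inter, hx_union⟩ := hx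
  cases hγ : s γ
  · exact decide_eq_false fun hmem => hx_union (Set.mem_iUnion.2 ⟨⟨γ, hγ⟩, hmem⟩)
  · exact decide_eq_true (Set.mem_iInter.1 hx_inter ⟨γ, hγ⟩)

namespace PropForm

variable {V α : Type u}

open Classical in
theorem mem_interp_iff (A : V → Set α) (φ : PropForm V) (x : α) :
    x ∈ φ.interp A ↔ φ.Sat fun δ => decide (x ∈ A δ) := by
  induction φ with
  | var y => simp [interp, Sat]
  | neg ψ ih => simp [interp, Sat, ih]
  | conj ι f ih => simp only [interp, Sat, Set.mem_iInter, ih]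

theorem sat_congr {φ : PropForm V} {v w : V → Bool} (h : ∀ x ∈ φ.vars, v x = w x) :
    φ.Sat v ↔ φ.Sat w := by
  induction φ with
  | var y => simp [Sat, h y rfl]
  | neg ψ ih => exact not_congr (ih h)
  | conj ι f ih => exact forall_congr' fun i => ih i fun x hx => h x (Set.mem_iUnion.2 ⟨i, hx⟩)

theorem mk_vars_lt {κ : Cardinal.{u}} (hκ : κ.IsRegular) {φ : PropForm V} (hφ : φ.Small κ) :
    #φ.vars < κ := by
  induction φ with
  | var y => simpa [vars] using one_lt_aleph0.trans_le hκ.aleph0_le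
  | neg ψ ih => exact ih hφ
  | conj ι f ih =>
    obtain ⟨hι, hf⟩ := hφ
    calc #(⋃ i, (f i).vars) ≤ Cardinal.sum fun i => #(f i).vars := mk_iUnion_le_sum_mk
      _ < κ := sum_lt_of_isRegular hκ hι fun i => ih i (hf i)

theorem interp_nonempty_iff {A : V → Set α} {φ : PropForm V}
    (hA : ∀ s : φ.vars → Bool, (Aset A φ.vars s).Nonempty) :
    (φ.interp A).Nonempty ↔ ∃ v, φ.Sat v := by
  constructor
  · rintro ⟨x, hx⟩
    exact ⟨_, (mem_interp_iff A φ x).1 hx⟩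
  · rintro ⟨v, hv⟩
    obtain ⟨x, hx⟩ := hA fun γ => v γ
    refine ⟨x, (mem_interp_iff A φ x).2 ((sat_congr fun y hy => ?_).1 hv)⟩
    exact (decide_mem_eq_of_mem_Aset hx ⟨y, hy⟩).symm

theorem interp_eq_of_sat_iff (A : V → Set α) {φ ψ : PropForm V} (h : ∀ v, φ.Sat v ↔ ψ.Sat v) :
    φ.interp A = ψ.interp A := by
  ext x
  rw [mem_interp_iff, mem_interp_iff, h]

end PropForm

open PropForm in
theorem statement4_general {V α : Type u} (κ : Cardinal.{u})
    (hreg : κ.IsRegular) (A : V → Set α)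
    (hind : ∀ (Γ : Set V), #Γ < κ → ∀ s : Γ → Bool, (Aset A Γ s).Nonempty)
    (φ : PropForm V) (hφ : φ.Small κ) :
    ((∃ v : V → Bool, φ.Sat v) ↔ φ.interp A ≠ ∅) ∧
    (∀ ψ : PropForm V, ψ.Small κ → (∀ v : V → Bool, (φ.Sat v ↔ ψ.Sat v)) →
      φ.interp A = ψ.interp A) := by
  refine ⟨?_, fun ψ _ h => interp_eq_of_sat_iff A h⟩
  rw [← Set.nonempty_iff_ne_empty, interp_nonempty_iff (hind φ.vars (mk_vars_lt hreg hφ))]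

/-- Let `κ ≤ lam` be infinite cardinals with `κ` regular and uncountable, let
`A : V → Set α` (with `|V| = 2 ^ lam`, `|α| = lam`) be a `κ`-independent family, and let
`ι = interp A` be the induced interpretation of `L_{κ,1}` formulas.  Then a formula `φ`
is satisfiable iff `ι(φ) ≠ ∅`; consequently, if `φ ↔ ψ` is a tautology then
`ι(φ) = ι(ψ)`. -/
theorem statement4 {V α : Type u} (κ : Cardinal.{u})
    (hreg : κ.IsRegular) (hunc : ℵ₀ < κ) (hainf : ℵ₀ ≤ #α) (hka : κ ≤ #α)
    (hV : #V = 2 ^ #α) (A : V → Set α)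
    (hind : ∀ (Γ : Set V), #Γ < κ → ∀ s : Γ → Bool, (Aset A Γ s).Nonempty)
    (φ : PropForm V) (hφ : φ.Small κ) :
    ((∃ v : V → Bool, φ.Sat v) ↔ φ.interp A ≠ ∅) ∧
    (∀ ψ : PropForm V, ψ.Small κ → (∀ v : V → Bool, (φ.Sat v ↔ ψ.Sat v)) →
      φ.interp A = ψ.interp A) :=
  statement4_general κ hreg A hind φ hφ
end

section
/- Let κ ≤ λ be cardinals with κ regular and uncountable. Suppose that every κ-consistent set of L_{κ,1} propositional formulas over a set of 2^λ propositional variables is satisfiable. Then κ has the λ-filter extension property: every κ-complete filter on λ extends to a κ-complete ultrafilter on λ. (Taking variables a_X for X ⊆ λ and the κ-consistent theory asserting a_X for X in the filter, closure under intersections of fewer than κ sets and supersets, and a_X ↔ ¬a_{λ\X}, any satisfying assignment yields such an ultrafilter.) -/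
open Cardinal

/-- A filter `F` is `κ`-complete if it is closed under intersections of fewer than `κ`
of its members. -/
def IsKappaComplete (κ : Cardinal.{u}) {β : Type u} (F : Filter β) : Prop :=
  ∀ S : Set (Set β), #S < κ → S ⊆ F.sets → ⋂₀ S ∈ F

/-- `κ` has the `lam`-filter extension property if every `κ`-complete (proper) filter on
a set of size `lam` extends to a `κ`-complete ultrafilter. -/
def HasFilterExt (κ lam : Cardinal.{u}) : Prop :=
  ∀ (β : Type u), #β = lam → ∀ F : Filter β, F.NeBot → IsKappaComplete κ F →
    ∃ U : Ultrafilter β, (U : Filter β) ≤ F ∧ IsKappaComplete κ (U : Filter β)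

/-!
Read the variable `X : Set β` as "`X ∈ U`". The theory `FilterAxiom κ F` asserts `X` for
`X ∈ F`, that `Xᶜ` holds iff `X` fails, closure of truth under intersections of fewer than `κ`
sets and under supersets, so a model of it is the membership predicate of a `κ`-complete
ultrafilter finer than `F`. Fewer than `κ` of its axioms mention fewer than `κ` members of `F`,
whose intersection contains a point `b`, and the principal ultrafilter at `b` satisfies them.
-/

namespace PropForm

variable {V : Type u}

protected def and (φ ψ : PropForm V) : PropForm V :=
  .conj (ULift Bool) fun b => if b.down then φ else ψ

protected def imp (φ ψ : PropForm V) : PropForm V :=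
  .neg (φ.and ψ.neg)

@[simp]
theorem sat_neg {v : V → Bool} {φ : PropForm V} : φ.neg.Sat v ↔ ¬ φ.Sat v := Iff.rfl

@[simp]
theorem sat_var {v : V → Bool} {x : V} : (var x).Sat v ↔ v x = true := Iff.rfl

@[simp]
theorem sat_and {v : V → Bool} {φ ψ : PropForm V} :
    (φ.and ψ).Sat v ↔ φ.Sat v ∧ ψ.Sat v :=
  ⟨fun h => ⟨by simpa using h ⟨true⟩, by simpa using h ⟨false⟩⟩,
    fun ⟨h₁, h₂⟩ ⟨b⟩ => by cases b <;> simpa⟩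

@[simp]
theorem sat_imp {v : V → Bool} {φ ψ : PropForm V} :
    (φ.imp ψ).Sat v ↔ (φ.Sat v → ψ.Sat v) := by
  simp [PropForm.imp]

theorem Small.and {κ : Cardinal.{u}} (hκ : 2 < κ) {φ ψ : PropForm V}
    (hφ : φ.Small κ) (hψ : ψ.Small κ) : (φ.and ψ).Small κ :=
  ⟨by simpa using hκ, fun ⟨b⟩ => by cases b <;> simpa⟩

theorem Small.imp {κ : Cardinal.{u}} (hκ : 2 < κ) {φ ψ : PropForm V}
    (hφ : φ.Small κ) (hψ : ψ.Small κ) : (φ.imp ψ).Small κ :=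
  hφ.and hκ hψ

end PropForm

open PropForm

variable {β : Type u} {κ : Cardinal.{u}}

inductive FilterAxiom (κ : Cardinal.{u}) (F : Filter β) : PropForm (Set β) → Prop
  | mem {X : Set β} : X ∈ F → FilterAxiom κ F (var X)
  | compl_of_not (X : Set β) : FilterAxiom κ F ((var X).neg.imp (var Xᶜ))
  | not_of_compl (X : Set β) : FilterAxiom κ F ((var Xᶜ).imp (var X).neg)
  | sInter {S : Set (Set β)} : #S < κ →
      FilterAxiom κ F ((conj S fun X => var X.1).imp (var (⋂₀ S)))
  | mono {X Y : Set β} : X ⊆ Y → FilterAxiom κ F ((var X).imp (var Y))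

theorem filterAxiom_var_iff {F : Filter β} {X : Set β} :
    FilterAxiom κ F (var X) ↔ X ∈ F :=
  ⟨fun h => by cases h; assumption, .mem⟩

theorem FilterAxiom.small (hκ : 2 < κ) {F : Filter β} {φ : PropForm (Set β)}
    (h : FilterAxiom κ F φ) : φ.Small κ := by
  cases h with
  | mem => trivial
  | compl_of_not | not_of_compl | mono => exact Small.imp hκ trivial trivial
  | sInter hS => exact Small.imp hκ ⟨hS, fun _ => trivial⟩ trivial

theorem FilterAxiom.of_var_mem {F G : Filter β} {φ : PropForm (Set β)}
    (h : FilterAxiom κ F φ) (hG : ∀ X, φ = var X → X ∈ G) : FilterAxiom κ G φ := by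
  cases h with
  | mem => exact .mem (hG _ rfl)
  | compl_of_not X => exact .compl_of_not X
  | not_of_compl X => exact .not_of_compl X
  | sInter hS => exact .sInter hS
  | mono hXY => exact .mono hXY

theorem sat_filterAxiom_iff {F : Filter β} {v : Set β → Bool} :
    (∀ φ, FilterAxiom κ F φ → φ.Sat v) ↔
      (∀ X ∈ F, v X = true) ∧ (∀ X, v Xᶜ = !v X) ∧
      (∀ S : Set (Set β), #S < κ → (∀ X ∈ S, v X = true) → v (⋂₀ S) = true) ∧
      (∀ X Y, X ⊆ Y → v X = true → v Y = true) := by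
  constructor
  · intro hv
    refine ⟨fun X hX => hv _ (.mem hX), fun X => ?_, fun S hS hSv => ?_,
      fun X Y hXY => sat_imp.1 (hv _ (.mono hXY))⟩
    · have h₁ := hv _ (.compl_of_not X)
      have h₂ := hv _ (.not_of_compl X)
      simp only [sat_imp, sat_neg, sat_var] at h₁ h₂
      cases hX : v X <;> cases hXc : v Xᶜ <;> simp_all
    · exact sat_imp.1 (hv _ (.sInter hS)) fun X => hSv X.1 X.2
  · rintro ⟨hF, hcompl, hsInter, hmono⟩ φ h
    cases h with
    | mem hX => exact hF _ hX
    | compl_of_not X => simp [hcompl]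
    | not_of_compl X => simp [hcompl]
    | sInter hS => exact sat_imp.2 fun hSv => hsInter _ hS fun X hX => hSv ⟨X, hX⟩
    | mono hXY => exact sat_imp.2 (hmono _ _ hXY)

theorem exists_ultrafilter_of_sat_filterAxiom (hκ : 2 < κ) {F : Filter β} {v : Set β → Bool}
    (hv : ∀ φ, FilterAxiom κ F φ → φ.Sat v) :
    ∃ U : Ultrafilter β, ↑U ≤ F ∧ IsKappaComplete κ (U : Filter β) := by
  obtain ⟨hF, hcompl, hsInter, hmono⟩ := sat_filterAxiom_iff.1 hv
  let G : Filter β :=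
    { sets := {X | v X = true}
      univ_sets := hF _ Filter.univ_mem
      sets_of_superset := fun hX hXY => hmono _ _ hXY hX
      inter_sets := fun {X Y} hX hY => by
        have hXY : #({X, Y} : Set (Set β)) < κ :=
          calc #({X, Y} : Set (Set β)) ≤ #({Y} : Set (Set β)) + 1 := mk_insert_le
            _ = 2 := by rw [mk_singleton, one_add_one_eq_two]
            _ < κ := hκ
        simpa using hsInter {X, Y} hXY (by rintro Z (rfl | rfl) <;> assumption) }
  refine ⟨.ofComplNotMemIff G fun X => ?_, hF, hsInter⟩
  change ¬ v Xᶜ = true ↔ v X = true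
  simp [hcompl]

theorem exists_sat_of_filterAxiom_of_mk_lt {F : Filter β} [F.NeBot] (hF : IsKappaComplete κ F)
    (Φ : Set (PropForm (Set β))) (hΦ : ∀ φ ∈ Φ, FilterAxiom κ F φ)
    (hΦκ : #Φ < lift.{u + 1} κ) : ∃ v : Set β → Bool, ∀ φ ∈ Φ, φ.Sat v := by
  classical
  set T : Set (Set β) := {X | var X ∈ Φ}
  have hTκ : #T < κ := by
    have : lift.{u + 1} #T ≤ lift.{u} #Φ :=
      lift_mk_le'.2 ⟨⟨fun X => ⟨var X.1, X.2⟩, fun X Y h => Subtype.ext (by simpa using h)⟩⟩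
    rw [lift_id'.{u, u + 1}] at this
    exact lift_lt.1 (this.trans_lt hΦκ)
  obtain ⟨b, hb⟩ := Filter.nonempty_of_mem <|
    hF T hTκ fun X hX => filterAxiom_var_iff.1 (hΦ _ hX)
  refine ⟨fun X => decide (b ∈ X), fun φ hφ =>
    sat_filterAxiom_iff.2 ?_ φ ((hΦ φ hφ).of_var_mem (G := pure b) ?_)⟩
  · refine ⟨fun X hX => by simpa using hX, fun X => by simp, fun S _ hS => ?_,
      fun X Y hXY hX => by simpa using hXY (by simpa using hX)⟩
    simpa using fun X hX => of_decide_eq_true (hS X hX)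
  · rintro X rfl
    exact hb X hφ

theorem statement6_general (κ lam : Cardinal.{u})
    (hunc : ℵ₀ < κ)
    (hcompact : ∀ (V : Type u), #V = 2 ^ lam →
      ∀ Φ : Set (PropForm V), (∀ φ ∈ Φ, φ.Small κ) →
        (∀ Φ' ⊆ Φ, #Φ' < Cardinal.lift.{u + 1} κ → ∃ v : V → Bool, ∀ φ ∈ Φ', φ.Sat v) →
        ∃ v : V → Bool, ∀ φ ∈ Φ, φ.Sat v) :
    HasFilterExt κ lam := by
  intro β hβ F _ hF
  have hκ : (2 : Cardinal) < κ := natCast_lt_aleph0.trans hunc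
  obtain ⟨v, hv⟩ := hcompact (Set β) (by rw [mk_set, hβ]) {φ | FilterAxiom κ F φ}
    (fun _ => FilterAxiom.small hκ) (exists_sat_of_filterAxiom_of_mk_lt hF)
  exact exists_ultrafilter_of_sat_filterAxiom hκ hv

/-- Let `κ ≤ lam` be cardinals with `κ` regular and uncountable, and suppose that every
`κ`-consistent set of `L_{κ,1}` propositional formulas over a set of `2 ^ lam`
propositional variables is satisfiable.  Then `κ` has the `lam`-filter extension
property: every `κ`-complete (proper) filter on a set of size `lam` extends to a
`κ`-complete ultrafilter. -/
theorem statement6 (κ lam : Cardinal.{u})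
    (hreg : κ.IsRegular) (hunc : ℵ₀ < κ) (hka : κ ≤ lam)
    (hcompact : ∀ (V : Type u), #V = 2 ^ lam →
      ∀ Φ : Set (PropForm V), (∀ φ ∈ Φ, φ.Small κ) →
        (∀ Φ' ⊆ Φ, #Φ' < Cardinal.lift.{u + 1} κ → ∃ v : V → Bool, ∀ φ ∈ Φ', φ.Sat v) →
        ∃ v : V → Bool, ∀ φ ∈ Φ, φ.Sat v) :
    HasFilterExt κ lam :=
  statement6_general κ lam hunc hcompact
end

section
/- Let κ ≤ λ be cardinals with κ regular and uncountable, λ^{<κ} = λ, and suppose κ has the λ-filter extension property. Then for every regular cardinal μ with κ ≤ μ ≤ 2^λ, the principle □(μ) fails: there is no □(μ)-sequence. -/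
open Cardinal

/-- `β` is an accumulation (limit) point of the set of ordinals `C`:
every ordinal below `β` is exceeded by an element of `C` below `β`. -/
def IsAccPt (β : Ordinal.{u}) (C : Set Ordinal.{u}) : Prop :=
  β ≠ 0 ∧ ∀ γ < β, ∃ c ∈ C, γ < c ∧ c < β

/-- `C` is a club (closed unbounded) subset of the ordinal `α`: `C ⊆ α`, `C` contains all
of its accumulation points below `α`, and `C` is unbounded in `α`. -/
def IsClubIn (C : Set Ordinal.{u}) (α : Ordinal.{u}) : Prop :=
  C ⊆ Set.Iio α ∧ (∀ β < α, IsAccPt β C → β ∈ C) ∧ ∀ γ < α, ∃ c ∈ C, γ < c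

/-- `C` is a `□(μ)`-sequence (only the values of `C` at limit ordinals below `μ` are
relevant): every `C α` is a club in `α`, the sequence is coherent at accumulation
points, and it has no thread. -/
def IsSquareSeq (μ : Ordinal.{u}) (C : Ordinal.{u} → Set Ordinal.{u}) : Prop :=
  (∀ α < μ, Order.IsSuccLimit α →
      IsClubIn (C α) α ∧ ∀ β < α, IsAccPt β (C α) → C β = C α ∩ Set.Iio β) ∧
  ¬ ∃ D : Set Ordinal.{u}, IsClubIn D μ ∧ ∀ β < μ, IsAccPt β D → C β = D ∩ Set.Iio β

/-- The square principle `□(μ)`: there exists a `□(μ)`-sequence. -/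
def SquarePrinciple (μ : Ordinal.{u}) : Prop :=
  ∃ C : Ordinal.{u} → Set Ordinal.{u}, IsSquareSeq μ C

/-!
Suppose `C` is a `□(μ)`-sequence. Since `lam ^< κ = lam`, a set of size `lam` carries a
`< κ`-independent family of `2 ^ lam ≥ μ` subsets, one for each formula of a small language
speaking about `(μ, C)` with parameters below `μ`. The sets containing every point that realizes
the type of some ordinal in a tail of `μ` form a proper `κ`-complete filter; a `κ`-complete
ultrafilter extending it becomes a countably complete uniform ultrafilter on the definable
subsets of `μ`, and definable functions modulo it form a well-founded ultrapower `j`.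
Let `D` be the set of `β < μ` such that `sup j''β` is a limit point of `j(C)` at `sup j''μ`.
Iterating "next point of that club" shows that `D` is unbounded, and coherence of `j(C)` at
`sup j''β₂` transfers back to `β₁` being a limit point of `C β₂` for `β₁ < β₂` in `D`.
Hence `⋃ β ∈ D, C β` is a thread.
-/

open Ordinal Set Order

universe u

theorem IsAccPt.mono {β : Ordinal.{u}} {S T : Set Ordinal.{u}} (h : IsAccPt β S)
    (hST : S ∩ Iio β ⊆ T) : IsAccPt β T := by
  refine ⟨h.1, fun γ hγ => ?_⟩
  obtain ⟨c, hc, hγc, hcβ⟩ := h.2 γ hγ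
  exact ⟨c, hST ⟨hc, hcβ⟩, hγc, hcβ⟩

theorem sSup_inter_Iio_lt_of_not_isAccPt {β : Ordinal.{u}} {S : Set Ordinal.{u}} (hβ : β ≠ 0)
    (h : ¬ IsAccPt β S) : sSup (S ∩ Iio β) < β := by
  refine (csSup_le' fun c hc => hc.2.le).lt_of_ne fun heq => h ⟨hβ, fun γ hγ => ?_⟩
  obtain ⟨c, hc, hγc⟩ := exists_lt_of_lt_csSup' (heq ▸ hγ)
  exact ⟨c, hc.1, hγc, hc.2⟩

theorem IsClubIn.sInf_inter_Ioo_mem {S : Set Ordinal.{u}} {α γ : Ordinal.{u}} (hS : IsClubIn S α)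
    (hγ : γ < α) : sInf (S ∩ Ioo γ α) ∈ S ∩ Ioo γ α := by
  obtain ⟨c, hc, hγc⟩ := hS.2.2 γ hγ
  exact csInf_mem ⟨c, hc, hγc, hS.1 hc⟩

namespace Ordinal

theorem isSuccLimit_of_aleph0_lt_cof {μ : Ordinal.{u}} (hμ : ℵ₀ < μ.cof) : IsSuccLimit μ :=
  one_lt_cof_iff.1 (one_lt_aleph0.trans hμ)

theorem add_omega0_lt_of_aleph0_lt_cof {a μ : Ordinal.{u}} (hμ : ℵ₀ < μ.cof) (ha : a < μ) :
    a + ω < μ := by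
  rw [← iSup_add_natCast]
  exact lift_iSup_lt_of_lt_cof (by simpa using hμ) fun n =>
    (isSuccLimit_of_aleph0_lt_cof hμ).add_natCast_lt ha n

theorem isSuccLimit_omega0_mul_div {a : Ordinal.{u}} (h : ω ≤ a) : IsSuccLimit (ω * (a / ω)) :=
  isSuccLimit_mul_left isSuccLimit_omega0 ((div_pos omega0_ne_zero).2 h)

theorem lt_omega0_mul_div {a b : Ordinal.{u}} (h : a + ω ≤ b) : a < ω * (b / ω) := by
  by_contra! hle
  exact (h.trans_lt (lt_mul_div_add b omega0_ne_zero)).not_ge (by gcongr)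

theorem iterate_lt_nfp' {f : Ordinal.{u} → Ordinal.{u}} (hf : ∀ a, a < f a) (a : Ordinal.{u})
    (n : ℕ) : f^[n] a < nfp f a :=
  (hf _).trans_le (by simpa only [Function.iterate_succ_apply'] using iterate_le_nfp f a (n + 1))

theorem isSuccLimit_nfp {f : Ordinal.{u} → Ordinal.{u}} (hf : ∀ a, a < f a) (a : Ordinal.{u}) :
    IsSuccLimit (nfp f a) := by
  refine isSuccLimit_iff.2
    ⟨(iterate_lt_nfp' hf a 0).ne_bot, isSuccPrelimit_of_succ_lt fun b hb => ?_⟩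
  obtain ⟨n, hn⟩ := lt_nfp_iff.1 hb
  exact (succ_le_of_lt hn).trans_lt (iterate_lt_nfp' hf a n)

end Ordinal

/-! ### Coherent sequences and threads -/

/-- The first half of `IsSquareSeq`; the second half says that there is no `IsThread`. -/
def IsCoherentClubSeq (μ : Ordinal.{u}) (C : Ordinal.{u} → Set Ordinal.{u}) : Prop :=
  ∀ α < μ, IsSuccLimit α → IsClubIn (C α) α ∧ ∀ β < α, IsAccPt β (C α) → C β = C α ∩ Iio β

def IsThread (μ : Ordinal.{u}) (C : Ordinal.{u} → Set Ordinal.{u}) (D : Set Ordinal.{u}) : Prop :=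
  IsClubIn D μ ∧ ∀ β < μ, IsAccPt β D → C β = D ∩ Iio β

namespace IsCoherentClubSeq

variable {μ α β γ : Ordinal.{u}} {C : Ordinal.{u} → Set Ordinal.{u}}

theorem isClubIn (hC : IsCoherentClubSeq μ C) (hα : α < μ) (hlim : IsSuccLimit α) :
    IsClubIn (C α) α :=
  (hC α hα hlim).1

theorem eq_inter_Iio (hC : IsCoherentClubSeq μ C) (hα : α < μ) (hlim : IsSuccLimit α)
    (hβ : β < α) (hacc : IsAccPt β (C α)) : C β = C α ∩ Iio β :=
  (hC α hα hlim).2 β hβ hacc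

theorem mem_iff_of_isAccPt (hC : IsCoherentClubSeq μ C) (hα : α < μ) (hlim : IsSuccLimit α)
    (hβ : β ≤ α) (hacc : IsAccPt β (C α)) (hγ : γ < β) : γ ∈ C β ↔ γ ∈ C α := by
  rcases hβ.lt_or_eq with hβ | rfl
  · simp [hC.eq_inter_Iio hα hlim hβ hacc, hγ]
  · rfl

theorem isThread_biUnion (hC : IsCoherentClubSeq μ C) {D : Set Ordinal.{u}}
    (hD : ∀ β ∈ D, β < μ ∧ IsSuccLimit β) (hunb : ∀ γ < μ, ∃ β ∈ D, γ < β)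
    (hacc : ∀ β₁ ∈ D, ∀ β₂ ∈ D, β₁ < β₂ → IsAccPt β₁ (C β₂)) :
    IsThread μ C (⋃ β ∈ D, C β) := by
  set T := ⋃ β ∈ D, C β
  have hclub (β) (hβ : β ∈ D) : IsClubIn (C β) β := hC.isClubIn (hD β hβ).1 (hD β hβ).2
  have hcoh (β₁) (h₁ : β₁ ∈ D) (β₂) (h₂ : β₂ ∈ D) (h : β₁ < β₂) : C β₁ = C β₂ ∩ Iio β₁ :=
    hC.eq_inter_Iio (hD β₂ h₂).1 (hD β₂ h₂).2 h (hacc β₁ h₁ β₂ h₂ h)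
  have hT (β) (hβ : β ∈ D) : T ∩ Iio β = C β := by
    ext γ
    simp only [T, mem_inter_iff, mem_iUnion, mem_Iio]
    constructor
    · rintro ⟨⟨β', hβ', hγ⟩, hγβ⟩
      rcases lt_trichotomy β' β with h | rfl | h
      · exact (hcoh β' hβ' β hβ h ▸ hγ).1
      · exact hγ
      · exact hcoh β hβ β' hβ' h ▸ ⟨hγ, hγβ⟩
    · exact fun hγ => ⟨⟨β, hβ, hγ⟩, (hclub β hβ).1 hγ⟩
  have hTacc (β) (hβ : β < μ) (h : IsAccPt β T) : ∃ β' ∈ D, β < β' ∧ IsAccPt β (C β') := by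
    obtain ⟨β', hβ', hββ'⟩ := hunb β hβ
    exact ⟨β', hβ', hββ', h.mono fun γ hγ => hT β' hβ' ▸ ⟨hγ.1, hγ.2.trans hββ'⟩⟩
  refine ⟨⟨?_, fun β hβ h => ?_, fun γ hγ => ?_⟩, fun β hβ h => ?_⟩
  · simp only [T, iUnion_subset_iff]
    exact fun β hβ γ hγ => ((hclub β hβ).1 hγ).trans (hD β hβ).1
  · obtain ⟨β', hβ', hββ', hacc'⟩ := hTacc β hβ h
    exact mem_biUnion hβ' ((hclub β' hβ').2.1 β hββ' hacc')
  · obtain ⟨β', hβ', hγβ'⟩ := hunb γ hγ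
    obtain ⟨c, hc, hγc⟩ := (hclub β' hβ').2.2 γ hγβ'
    exact ⟨c, mem_biUnion hβ' hc, hγc⟩
  · obtain ⟨β', hβ', hββ', hacc'⟩ := hTacc β hβ h
    rw [hC.eq_inter_Iio (hD β' hβ').1 (hD β' hβ').2 hββ' hacc', ← hT β' hβ', inter_assoc,
      Iio_inter_Iio, min_eq_right hββ'.le]

end IsCoherentClubSeq

/-! ### Independent families -/

theorem Cardinal.mk_subtype_mk_lt_le {α : Type u} {κ c : Cardinal.{u}} (hc : ℵ₀ ≤ c)
    (hκc : κ ≤ c) (hpow : c ^< κ = c) (hα : #α ≤ c) : #{s : Set α // #s < κ} ≤ c := by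
  let g : (Σ o : κ.ord.ToType, {s : Set α // #s ≤ (o : Ordinal).card}) →
      {s : Set α // #s < κ} :=
    fun p => ⟨p.2.1, p.2.2.trans_lt (lt_ord.1 (ToType.toOrd p.1).2)⟩
  have hg : g.Surjective := fun s =>
    ⟨⟨ToType.mk ⟨(#s.1).ord, ord_lt_ord.2 s.2⟩, s.1, by simp⟩, rfl⟩
  have hbound (o : κ.ord.ToType) : #{s : Set α // #s ≤ (o : Ordinal).card} ≤ c :=
    (mk_bounded_set_le α _).trans <| (power_le_power_right (max_le hα hc)).trans <|
      (le_powerlt c (lt_ord.1 (ToType.toOrd o).2)).trans hpow.le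
  calc #{s : Set α // #s < κ} ≤ #(Σ o : κ.ord.ToType, {s : Set α // #s ≤ (o : Ordinal).card}) :=
        mk_le_of_surjective hg
    _ ≤ sum fun _ : κ.ord.ToType => c := by rw [mk_sigma]; exact sum_le_sum _ _ hbound
    _ = κ * c := by simp
    _ ≤ c := (mul_le_mul_left hκc c).trans (mul_eq_self hc).le

abbrev HausdorffCarrier (ι : Type u) (κ : Cardinal.{u}) : Type u :=
  Σ s : {s : Set ι // #s < κ}, {G : Set (Set s.1) // #G < κ}

theorem mk_hausdorffCarrier_le {ι : Type u} {κ : Cardinal.{u}} (hκ : ℵ₀ ≤ κ) (hκι : κ ≤ #ι)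
    (hpow : #ι ^< κ = #ι) : #(HausdorffCarrier ι κ) ≤ #ι := by
  have hι : ℵ₀ ≤ #ι := hκ.trans hκι
  have hsmall (s : {s : Set ι // #s < κ}) : #(Set s.1) ≤ #ι := by
    rw [mk_set]
    exact (power_le_power_right (ofNat_le_aleph0.trans hι)).trans
      ((le_powerlt _ s.2).trans hpow.le)
  rw [HausdorffCarrier, mk_sigma]
  refine (sum_le_sum _ _ fun s => mk_subtype_mk_lt_le hι hκι hpow (hsmall s)).trans ?_
  rw [sum_const, Cardinal.lift_id, Cardinal.lift_id]
  exact (mul_le_mul_left (mk_subtype_mk_lt_le hι hκι hpow le_rfl) _).trans (mul_eq_self hι).le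

theorem exists_injOn_preimage_val {ι I : Type u} {κ : Cardinal.{u}} (hκ : ℵ₀ ≤ κ) {f : I → Set ι}
    (hf : f.Injective) {M : Set I} (hM : #M < κ) :
    ∃ s : Set ι, #s < κ ∧ InjOn (fun a => ((↑) ⁻¹' f a : Set s)) M := by
  have hsep (q : {q : M × M // q.1 ≠ q.2}) : (symmDiff (f q.1.1) (f q.1.2)).Nonempty :=
    symmDiff_nonempty.2 fun h => q.2 (Subtype.ext (hf h))
  choose z hz using hsep
  refine ⟨range z, mk_range_le.trans_lt <| (mk_subtype_le _).trans_lt <| by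
    rw [mk_prod, Cardinal.lift_id]; exact mul_lt_of_lt hκ hM hM, fun a ha b hb hab => ?_⟩
  by_contra hne
  let q : {q : M × M // q.1 ≠ q.2} := ⟨(⟨a, ha⟩, ⟨b, hb⟩), fun h => hne congr($h.1)⟩
  have hq : z q ∈ f a ↔ z q ∈ f b := by
    simpa using congr(⟨z q, mem_range_self q⟩ ∈ $hab)
  rcases mem_symmDiff.1 (hz q) with h | h
  · exact h.2 (hq.1 h.1)
  · exact h.2 (hq.2 h.1)

theorem exists_independent_family {ι I : Type u} {κ : Cardinal.{u}} (hκ : ℵ₀ ≤ κ)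
    (hκι : κ ≤ #ι) (hpow : #ι ^< κ = #ι) (hI : #I ≤ 2 ^ #ι) :
    ∃ A : I → Set ι, ∀ M : Set I, #M < κ → ∀ p : I → Prop, ∃ z, ∀ a ∈ M, z ∈ A a ↔ p a := by
  obtain ⟨f⟩ : Nonempty (I ↪ Set ι) := (le_def _ _).1 (hI.trans_eq mk_set.symm)
  obtain ⟨e⟩ : Nonempty (HausdorffCarrier ι κ ↪ ι) :=
    (le_def _ _).1 (mk_hausdorffCarrier_le hκ hκι hpow)
  refine ⟨fun a => e '' {x | ((↑) ⁻¹' f a : Set x.1.1) ∈ x.2.1}, fun M hM p => ?_⟩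
  obtain ⟨s, hs, hinj⟩ := exists_injOn_preimage_val hκ f.injective hM
  let G : Set (Set s) := (fun a => (↑) ⁻¹' f a) '' {a ∈ M | p a}
  have hG : #G < κ := mk_image_le.trans_lt ((mk_le_mk_of_subset (sep_subset _ _)).trans_lt hM)
  refine ⟨e ⟨⟨s, hs⟩, G, hG⟩, fun a ha => ?_⟩
  rw [e.injective.mem_set_image]
  exact ⟨fun ⟨b, ⟨hb, hpb⟩, hba⟩ => hinj hb ha hba ▸ hpb, fun h => ⟨a, ⟨ha, h⟩, rfl⟩⟩

/-! ### The tail filter -/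

section TailFilter

variable {ι I : Type u} (κ : Cardinal.{u}) (μ : Ordinal.{u}) (A : I → Set ι)
  (T : I → Set Ordinal.{u})

/-- `Z` contains every point that realizes, on some fewer than `κ` indices, the `T`-type of an
ordinal in a tail of `μ`. -/
def IsTailSupported (Z : Set ι) : Prop :=
  ∃ M : Set I, #M < κ ∧ ∃ β < μ, ∀ ξ, β ≤ ξ → ξ < μ →
    ∀ z, (∀ a ∈ M, z ∈ A a ↔ ξ ∈ T a) → z ∈ Z

variable {κ μ A T}

theorem IsTailSupported.mono {Z W : Set ι} (h : IsTailSupported κ μ A T Z) (hZW : Z ⊆ W) :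
    IsTailSupported κ μ A T W :=
  let ⟨M, hM, β, hβ, hZ⟩ := h
  ⟨M, hM, β, hβ, fun ξ hβξ hξ z hz => hZW (hZ ξ hβξ hξ z hz)⟩

theorem isTailSupported_sInter (hκ : κ.IsRegular) (hκμ : κ ≤ μ.cof) {S : Set (Set ι)}
    (hS : #S < κ) (h : ∀ Z ∈ S, IsTailSupported κ μ A T Z) :
    IsTailSupported κ μ A T (⋂₀ S) := by
  choose M hM β hβ hZ using h
  refine ⟨⋃ Z ∈ S, M Z ‹_›, (card_biUnion_lt_iff_forall_of_isRegular hκ hS).2 hM,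
    ⨆ Z : S, β Z Z.2, iSup_lt_of_lt_cof (hS.trans_le hκμ) fun Z => hβ _ _,
    fun ξ hξ hξμ z hz Z hZS => hZ Z hZS ξ ((Ordinal.le_iSup _ ⟨Z, hZS⟩).trans hξ) hξμ z
      fun a ha => hz a (mem_iUnion₂_of_mem hZS ha)⟩

def tailFilter (hκ : κ.IsRegular) (hκμ : κ ≤ μ.cof) : Filter ι where
  sets := {Z | IsTailSupported κ μ A T Z}
  univ_sets := by
    simpa using isTailSupported_sInter (S := ∅) hκ hκμ (by simpa using hκ.pos) (by simp)
  sets_of_superset := IsTailSupported.mono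
  inter_sets {Z W} hZ hW := by
    simpa using isTailSupported_sInter (S := {Z, W}) hκ hκμ
      ((toFinite _).lt_aleph0.trans_le hκ.aleph0_le) (by rintro _ (rfl | rfl); exacts [hZ, hW])

theorem isKappaComplete_tailFilter (hκ : κ.IsRegular) (hκμ : κ ≤ μ.cof) :
    IsKappaComplete κ (tailFilter (A := A) (T := T) hκ hκμ) :=
  fun _ hS h => isTailSupported_sInter hκ hκμ hS h

theorem tailFilter_neBot (hκ : κ.IsRegular) (hκμ : κ ≤ μ.cof)
    (hA : ∀ M : Set I, #M < κ → ∀ p : I → Prop, ∃ z, ∀ a ∈ M, z ∈ A a ↔ p a) :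
    (tailFilter (A := A) (T := T) hκ hκμ).NeBot := by
  refine Filter.forall_mem_nonempty_iff_neBot.1 fun Z ⟨M, hM, β, hβ, hZ⟩ => ?_
  obtain ⟨z, hz⟩ := hA M hM (β ∈ T ·)
  exact ⟨z, hZ β le_rfl hβ z hz⟩

end TailFilter

/-! ### Definable terms and formulas -/

/-- Terms for functions `μ → μ` definable from `C` with parameters below `μ`, see `OrdTerm.eval`. -/
inductive OrdTerm (μ : Ordinal.{u}) : Type u
  | const : μ.ToType → OrdTerm μ
  | var : OrdTerm μ
  | limPart : OrdTerm μ → OrdTerm μ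
  | next : OrdTerm μ → OrdTerm μ → OrdTerm μ
  | supBelow : OrdTerm μ → OrdTerm μ → OrdTerm μ

inductive OrdFormula (μ : Ordinal.{u}) : Type u
  | lt : OrdTerm μ → OrdTerm μ → OrdFormula μ
  | mem : OrdTerm μ → OrdTerm μ → OrdFormula μ
  | isAccPt : OrdTerm μ → OrdTerm μ → OrdFormula μ
  | isLimit : OrdTerm μ → OrdFormula μ
  | not : OrdFormula μ → OrdFormula μ
  | and : OrdFormula μ → OrdFormula μ → OrdFormula μ

namespace OrdTerm

variable {μ : Ordinal.{u}}

/-- `limPart t` is the largest limit ordinal `≤ t` (`0` below `ω`), `next s t` the least element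
of `C t` strictly between `s` and `t`, and `supBelow s t` the supremum of `C t` below `s`.
Empty infima are `0`, so that `eval` never leaves `μ` (`eval_lt`). -/
noncomputable def eval (C : Ordinal.{u} → Set Ordinal.{u}) : OrdTerm μ → Ordinal.{u} → Ordinal.{u}
  | const x, _ => x
  | var, i => i
  | limPart t, i => ω * (eval C t i / ω)
  | next s t, i => sInf (C (eval C t i) ∩ Ioo (eval C s i) (eval C t i))
  | supBelow s t, i => sSup (C (eval C t i) ∩ Iio (eval C s i))

@[simp]
theorem eval_const (C : Ordinal.{u} → Set Ordinal.{u}) (x : μ.ToType) (i : Ordinal.{u}) :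
    (const x).eval C i = x :=
  rfl

theorem eval_lt (C : Ordinal.{u} → Set Ordinal.{u}) (t : OrdTerm μ) {i : Ordinal.{u}}
    (hi : i < μ) : t.eval C i < μ := by
  induction t with
  | const x => exact (ToType.toOrd x).2
  | var => exact hi
  | limPart t ih => exact (mul_div_le _ _).trans_lt ih
  | next s t _ ih =>
    rcases (C (t.eval C i) ∩ Ioo (s.eval C i) (t.eval C i)).eq_empty_or_nonempty with h | h
    · simpa only [eval, h, Ordinal.sInf_empty] using zero_le.trans_lt hi
    · exact (csInf_mem h).2.2.trans ih
  | supBelow s t ih _ => exact (csSup_le' fun c hc => hc.2.le).trans_lt ih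

section Encoding

variable {S : Type*} (pair : S × S → S) (tag : ℕ → S) (emb : μ.ToType → S)

def encode : OrdTerm μ → S
  | const x => pair (tag 0, emb x)
  | var => pair (tag 1, tag 0)
  | limPart t => pair (tag 2, encode t)
  | next s t => pair (tag 3, pair (encode s, encode t))
  | supBelow s t => pair (tag 4, pair (encode s, encode t))

variable {pair tag emb}

theorem encode_injective (hpair : pair.Injective) (htag : tag.Injective) (hemb : emb.Injective) :
    (encode pair tag emb).Injective := by
  intro s t h
  induction s generalizing t <;> cases t <;>
    simp only [encode, hpair.eq_iff, htag.eq_iff, hemb.eq_iff, Prod.mk.injEq] at h ⊢ <;>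
    grind

end Encoding

end OrdTerm

namespace OrdFormula

variable {μ : Ordinal.{u}}

def Holds (C : Ordinal.{u} → Set Ordinal.{u}) : OrdFormula μ → Ordinal.{u} → Prop
  | lt s t, i => s.eval C i < t.eval C i
  | mem s t, i => s.eval C i ∈ C (t.eval C i)
  | isAccPt s t, i => IsAccPt (s.eval C i) (C (t.eval C i))
  | isLimit t, i => IsSuccLimit (t.eval C i)
  | not φ, i => ¬ Holds C φ i
  | and φ ψ, i => Holds C φ i ∧ Holds C ψ i

section Encoding

variable {S : Type*} (pair : S × S → S) (tag : ℕ → S) (emb : μ.ToType → S)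

def encode : OrdFormula μ → S
  | lt s t => pair (tag 0, pair (s.encode pair tag emb, t.encode pair tag emb))
  | mem s t => pair (tag 1, pair (s.encode pair tag emb, t.encode pair tag emb))
  | isAccPt s t => pair (tag 2, pair (s.encode pair tag emb, t.encode pair tag emb))
  | isLimit t => pair (tag 3, t.encode pair tag emb)
  | not φ => pair (tag 4, encode φ)
  | and φ ψ => pair (tag 5, pair (encode φ, encode ψ))

variable {pair tag emb}

theorem encode_injective (hpair : pair.Injective) (htag : tag.Injective) (hemb : emb.Injective) :
    (encode pair tag emb).Injective := by
  have ht := OrdTerm.encode_injective hpair htag hemb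
  intro φ ψ h
  induction φ generalizing ψ <;> cases ψ <;>
    simp only [encode, hpair.eq_iff, htag.eq_iff, ht.eq_iff, Prod.mk.injEq] at h ⊢ <;>
    grind

end Encoding

theorem mk_le {c : Cardinal.{u}} (hc : ℵ₀ ≤ c) (hμ : μ.card ≤ c) : #(OrdFormula μ) ≤ c := by
  obtain ⟨pair⟩ : Nonempty (c.out × c.out ≃ c.out) := Cardinal.eq.1 (by simp [mul_eq_self hc])
  have : Infinite c.out := infinite_iff.2 (by simpa using hc)
  obtain ⟨emb⟩ : Nonempty (μ.ToType ↪ c.out) := (le_def _ _).1 (by simpa using hμ)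
  calc #(OrdFormula μ) ≤ #c.out := mk_le_of_injective
        (encode_injective pair.injective (Infinite.natEmbedding _).injective emb.injective)
    _ = c := mk_out c

end OrdFormula

/-! ### Definable ultrafilters -/

/-- `V` selects the "large" definable subsets of `μ`: it is an ultrafilter on the algebra of
definable sets, countably complete and containing every final segment. Terms modulo `V` then
behave like the elements of an ultrapower, with `OrdTerm.const x` playing the role of `j(x)`. -/
structure IsDefinableUltrafilter {μ : Ordinal.{u}} (C : Ordinal.{u} → Set Ordinal.{u})
    (V : OrdFormula μ → Prop) : Prop where
  mem_or_mem_not (φ : OrdFormula μ) : V φ ∨ V φ.not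
  exists_forall_holds (S : Set (OrdFormula μ)) :
    S.Countable → (∀ φ ∈ S, V φ) → ∃ i < μ, ∀ φ ∈ S, φ.Holds C i
  const_lt_var (x : μ.ToType) : V (.lt (.const x) .var)

theorem exists_isDefinableUltrafilter {κ lam : Cardinal.{u}} (hκ : κ.IsRegular) (hunc : ℵ₀ < κ)
    (hκlam : κ ≤ lam) (hpow : lam ^< κ = lam) (hfe : HasFilterExt κ lam) {μ : Ordinal.{u}}
    (hκμ : κ ≤ μ.cof) (hμ : μ.card ≤ 2 ^ lam) (C : Ordinal.{u} → Set Ordinal.{u}) :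
    ∃ V : OrdFormula μ → Prop, IsDefinableUltrafilter C V := by
  have hlam : #lam.out = lam := mk_out lam
  have hμlim : IsSuccLimit μ := isSuccLimit_of_aleph0_lt_cof (hunc.trans_le hκμ)
  obtain ⟨A, hA⟩ := exists_independent_family (I := OrdFormula μ) hκ.aleph0_le
    (hlam ▸ hκlam) (by rw [hlam, hpow]) <| by
      rw [hlam]; exact OrdFormula.mk_le ((hunc.le.trans hκlam).trans (cantor lam).le) hμ
  let T (φ : OrdFormula μ) : Set Ordinal.{u} := {i | φ.Holds C i}
  obtain ⟨U, hUF, hU⟩ := hfe _ hlam (tailFilter (T := T) hκ hκμ) (tailFilter_neBot hκ hκμ hA)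
    (isKappaComplete_tailFilter hκ hκμ)
  have hsupp {Z : Set lam.out} (h : IsTailSupported κ μ A T Z) : Z ∈ U := hUF h
  have hfin (S : Set (OrdFormula μ)) (hS : S.Finite) : #S < κ :=
    hS.lt_aleph0.trans hunc
  refine ⟨fun φ => A φ ∈ U, ⟨fun φ => ?_, fun S hS hSU => ?_, fun x => ?_⟩⟩
  · refine Ultrafilter.union_mem_iff.1 <| hsupp ⟨{φ, φ.not}, hfin _ (toFinite _), 0, hμlim.bot_lt,
      fun ξ _ _ z hz => ?_⟩
    have h₁ := hz φ (by simp)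
    have h₂ := hz φ.not (by simp)
    by_cases hξ : φ.Holds C ξ
    · exact Or.inl (h₁.2 hξ)
    · exact Or.inr (h₂.2 hξ)
  · by_contra! hno
    have hint : ⋂₀ (A '' S) ∈ U :=
      hU _ (mk_image_le.trans_lt (hS.le_aleph0.trans_lt hunc)) (by
        rintro _ ⟨φ, hφ, rfl⟩; exact hSU φ hφ)
    refine Ultrafilter.compl_notMem_iff.2 hint <| hsupp ⟨S, hS.le_aleph0.trans_lt hunc, 0,
      hμlim.bot_lt, fun ξ _ hξ z hz hzS => ?_⟩
    obtain ⟨φ, hφ, hφξ⟩ := hno ξ hξ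
    exact hφξ ((hz φ hφ).1 (hzS _ ⟨φ, hφ, rfl⟩))
  · refine hsupp ⟨{.lt (.const x) .var}, hfin _ (toFinite _), x + 1,
      hμlim.add_one_lt (ToType.toOrd x).2, fun ξ hxξ _ z hz => (hz _ rfl).2 ?_⟩
    exact (lt_add_one _).trans_le hxξ

/-! ### The definable ultrapower -/

def IsConstUB {μ : Ordinal.{u}} (V : OrdFormula μ → Prop) (β : Ordinal.{u}) (t : OrdTerm μ) :
    Prop :=
  ∀ x : μ.ToType, (x : Ordinal) < β → V (.lt (.const x) t)

namespace IsDefinableUltrafilter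

variable {μ β : Ordinal.{u}} {C : Ordinal.{u} → Set Ordinal.{u}} {V : OrdFormula μ → Prop}
  {φ ψ : OrdFormula μ} {s t u : OrdTerm μ}

theorem exists_holds (hV : IsDefinableUltrafilter C V) (h : V φ) : ∃ i < μ, φ.Holds C i := by
  obtain ⟨i, hi, h⟩ := hV.exists_forall_holds {φ} (countable_singleton φ) (by simpa using h)
  exact ⟨i, hi, h φ rfl⟩

theorem mem_not_iff (hV : IsDefinableUltrafilter C V) : V φ.not ↔ ¬ V φ := by
  refine ⟨fun h h' => ?_, (hV.mem_or_mem_not φ).resolve_left⟩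
  obtain ⟨i, -, hi⟩ := hV.exists_forall_holds {φ, φ.not} (toFinite _).countable (by simp [h, h'])
  exact hi φ.not (by simp) (hi φ (by simp))

theorem mem_and (hV : IsDefinableUltrafilter C V) (hφ : V φ) (hψ : V ψ) : V (φ.and ψ) := by
  by_contra h
  obtain ⟨i, -, hi⟩ := hV.exists_forall_holds {φ, ψ, (φ.and ψ).not} (toFinite _).countable
    (by simp [hφ, hψ, hV.mem_not_iff.2 h])
  exact hi (φ.and ψ).not (by simp) ⟨hi φ (by simp), hi ψ (by simp)⟩

theorem mem_of_imp (hV : IsDefinableUltrafilter C V) (hφ : V φ)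
    (h : ∀ i < μ, φ.Holds C i → ψ.Holds C i) : V ψ := by
  by_contra hψ
  obtain ⟨i, hi, h'⟩ := hV.exists_holds (hV.mem_and hφ (hV.mem_not_iff.2 hψ))
  exact h'.2 (h i hi h'.1)

theorem mem_of_forall_holds (hV : IsDefinableUltrafilter C V) (h : ∀ i < μ, ψ.Holds C i) :
    V ψ := by
  by_contra hψ
  obtain ⟨i, hi, h'⟩ := hV.exists_holds (hV.mem_not_iff.2 hψ)
  exact h' (h i hi)

theorem lt_trans (hV : IsDefinableUltrafilter C V) (h₁ : V (.lt s t)) (h₂ : V (.lt t u)) :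
    V (.lt s u) :=
  hV.mem_of_imp (hV.mem_and h₁ h₂) fun _ _ h => h.1.trans h.2

theorem lt_of_lt_of_not_lt (hV : IsDefinableUltrafilter C V) (h₁ : V (.lt s t))
    (h₂ : ¬ V (.lt u t)) : V (.lt s u) :=
  hV.mem_of_imp (hV.mem_and h₁ (hV.mem_not_iff.2 h₂)) fun _ _ h => h.1.trans_le (not_lt.1 h.2)

theorem const_lt_const_iff (hV : IsDefinableUltrafilter C V) {x y : μ.ToType} :
    V (.lt (.const x) (.const y)) ↔ (x : Ordinal) < y := by
  refine ⟨fun h => ?_, fun h => hV.mem_of_forall_holds fun _ _ => h⟩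
  obtain ⟨i, -, hi⟩ := hV.exists_holds h
  exact hi

theorem wellFounded_lt (hV : IsDefinableUltrafilter C V) :
    WellFounded fun s t : OrdTerm μ => V (.lt s t) := by
  refine wellFounded_iff_isEmpty_descending_chain.2 ⟨fun ⟨f, hf⟩ => ?_⟩
  obtain ⟨i, -, hi⟩ := hV.exists_forall_holds (range fun n => .lt (f (n + 1)) (f n))
    (countable_range _) (forall_mem_range.2 hf)
  obtain ⟨n, hn⟩ := WellFounded.not_rel_apply_succ (r := (· < ·)) fun n => (f n).eval C i
  exact hn (hi _ ⟨n, rfl⟩)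

noncomputable def lub (hV : IsDefinableUltrafilter C V) (β : Ordinal.{u}) : OrdTerm μ :=
  hV.wellFounded_lt.min {t | IsConstUB V β t} ⟨.var, fun x _ => hV.const_lt_var x⟩

theorem isConstUB_lub (hV : IsDefinableUltrafilter C V) (β : Ordinal.{u}) :
    IsConstUB V β (hV.lub β) :=
  hV.wellFounded_lt.min_mem {t | IsConstUB V β t} _

theorem not_lt_lub (hV : IsDefinableUltrafilter C V) (ht : IsConstUB V β t) :
    ¬ V (.lt t (hV.lub β)) :=
  hV.wellFounded_lt.not_lt_min {t | IsConstUB V β t} ht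

theorem exists_lt_const_of_lt_lub (hV : IsDefinableUltrafilter C V) (hβ : IsSuccLimit β)
    (hβμ : β ≤ μ) (h : V (.lt s (hV.lub β))) :
    ∃ x : μ.ToType, (x : Ordinal) < β ∧ V (.lt s (.const x)) := by
  by_contra! hs
  refine hV.not_lt_lub (fun x hx => ?_) h
  have hx₁ : (x : Ordinal) + 1 < β := hβ.add_one_lt hx
  let y : μ.ToType := ToType.mk ⟨x + 1, hx₁.trans_le hβμ⟩
  have hy : (y : Ordinal) = x + 1 := by simp [y]
  exact hV.lt_of_lt_of_not_lt (hV.const_lt_const_iff.2 (hy ▸ lt_add_one _)) (hs y (hy ▸ hx₁))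

/-- The virtual ordinal `sup j''μ`. -/
noncomputable def supConst (hV : IsDefinableUltrafilter C V) : OrdTerm μ :=
  (hV.lub μ).limPart

theorem isConstUB_supConst (hV : IsDefinableUltrafilter C V) (hμ : ℵ₀ < μ.cof) :
    IsConstUB V μ hV.supConst := fun x hx => by
  let y : μ.ToType := ToType.mk ⟨x + ω, add_omega0_lt_of_aleph0_lt_cof hμ hx⟩
  refine hV.mem_of_imp (hV.isConstUB_lub μ y (ToType.toOrd y).2) fun i _ h => ?_
  exact lt_omega0_mul_div (by simpa [y] using (h : (y : Ordinal) < _).le)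

theorem mem_isLimit_supConst (hV : IsDefinableUltrafilter C V) (hμ : ℵ₀ < μ.cof) :
    V (.isLimit hV.supConst) := by
  have hωμ : ω < μ := by
    simpa using add_omega0_lt_of_aleph0_lt_cof hμ (isSuccLimit_of_aleph0_lt_cof hμ).bot_lt
  let y : μ.ToType := ToType.mk ⟨ω, hωμ⟩
  refine hV.mem_of_imp (hV.isConstUB_lub μ y (ToType.toOrd y).2) fun i _ h => ?_
  exact isSuccLimit_omega0_mul_div (by simpa [y] using (h : (y : Ordinal) < _).le)

theorem exists_lt_const_of_lt_supConst (hV : IsDefinableUltrafilter C V) (hμ : ℵ₀ < μ.cof)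
    (h : V (.lt s hV.supConst)) : ∃ x : μ.ToType, V (.lt s (.const x)) := by
  have h' : V (.lt s (hV.lub μ)) :=
    hV.mem_of_imp h fun i _ hi => (hi : _ < ω * _).trans_le (mul_div_le _ _)
  obtain ⟨x, -, hx⟩ := hV.exists_lt_const_of_lt_lub (isSuccLimit_of_aleph0_lt_cof hμ) le_rfl h'
  exact ⟨x, hx⟩

theorem next_supConst_spec (hV : IsDefinableUltrafilter C V) (hμ : ℵ₀ < μ.cof)
    (hC : IsCoherentClubSeq μ C) (x : μ.ToType) :
    V (.mem (.next (.const x) hV.supConst) hV.supConst) ∧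
      V (.lt (.const x) (.next (.const x) hV.supConst)) ∧
      V (.lt (.next (.const x) hV.supConst) hV.supConst) := by
  have H := hV.mem_and (hV.mem_isLimit_supConst hμ)
    (hV.isConstUB_supConst hμ x (ToType.toOrd x).2)
  have key (i : Ordinal.{u}) (hi : i < μ)
      (h : IsSuccLimit (hV.supConst.eval C i) ∧ (x : Ordinal) < hV.supConst.eval C i) :=
    (hC.isClubIn (hV.supConst.eval_lt C hi) h.1).sInf_inter_Ioo_mem h.2
  exact ⟨hV.mem_of_imp H fun i hi h => (key i hi h).1,
    hV.mem_of_imp H fun i hi h => (key i hi h).2.1, hV.mem_of_imp H fun i hi h => (key i hi h).2.2⟩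

theorem mem_isAccPt_lub (hV : IsDefinableUltrafilter C V) (hβ : IsSuccLimit β) (hβμ : β ≤ μ)
    (hs : ∀ x : μ.ToType, (x : Ordinal) < β →
      ∃ t, V (.mem t s) ∧ V (.lt (.const x) t) ∧ V (.lt t (hV.lub β))) :
    V (.isAccPt (hV.lub β) s) := by
  -- otherwise `supBelow` gives a gap below `lub β`, and `hs` puts a point of `C s` into it
  by_contra hacc
  set b := hV.lub β
  let x₀ : μ.ToType := ToType.mk ⟨0, hβ.bot_lt.trans_le hβμ⟩
  have hb : V (.lt (.const x₀) b) := hV.isConstUB_lub β x₀ (by simpa [x₀] using hβ.bot_lt)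
  have hwb : V (.lt (.supBelow b s) b) :=
    hV.mem_of_imp (hV.mem_and (hV.mem_not_iff.2 hacc) hb) fun i _ h =>
      sSup_inter_Iio_lt_of_not_isAccPt (pos_of_gt (h.2 : _ < b.eval C i)).ne' h.1
  obtain ⟨x, hxβ, hwx⟩ := hV.exists_lt_const_of_lt_lub hβ hβμ hwb
  obtain ⟨t, hts, hxt, htb⟩ := hs x hxβ
  obtain ⟨i, -, h⟩ := hV.exists_holds (hV.mem_and hts (hV.mem_and htb (hV.lt_trans hwx hxt)))
  exact h.2.2.not_ge (le_csSup ⟨_, fun _ hc => hc.2.le⟩ ⟨h.1, h.2.1⟩)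

theorem mem_iff_mem_of_isAccPt (hV : IsDefinableUltrafilter C V) (hC : IsCoherentClubSeq μ C)
    {b : OrdTerm μ} (hs : V (.isLimit s)) (hbs : ¬ V (.lt s b)) (hacc : V (.isAccPt b s))
    (htb : V (.lt t b)) : V (.mem t b) ↔ V (.mem t s) := by
  have H := hV.mem_and hs (hV.mem_and (hV.mem_not_iff.2 hbs) (hV.mem_and hacc htb))
  constructor <;> intro h <;> refine hV.mem_of_imp (hV.mem_and H h) fun i hi h => ?_
  · exact (hC.mem_iff_of_isAccPt (s.eval_lt C hi) h.1.1 (not_lt.1 h.1.2.1) h.1.2.2.1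
      h.1.2.2.2).1 h.2
  · exact (hC.mem_iff_of_isAccPt (s.eval_lt C hi) h.1.1 (not_lt.1 h.1.2.1) h.1.2.2.1
      h.1.2.2.2).2 h.2

/-- The ordinals `β` such that `sup j''β` is a limit point of the virtual club `C (sup j''μ)`,
witnessed by definable elements lying between constants below `β`. -/
def accSet (hV : IsDefinableUltrafilter C V) : Set Ordinal.{u} :=
  {β | β < μ ∧ IsSuccLimit β ∧ ∀ x : μ.ToType, (x : Ordinal) < β → ∃ t, V (.mem t hV.supConst) ∧
    V (.lt (.const x) t) ∧ ∃ y : μ.ToType, (y : Ordinal) < β ∧ V (.lt t (.const y))}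

theorem exists_mem_accSet_gt (hV : IsDefinableUltrafilter C V) (hμ : ℵ₀ < μ.cof)
    (hC : IsCoherentClubSeq μ C) {γ : Ordinal.{u}} (hγ : γ < μ) : ∃ β ∈ hV.accSet, γ < β := by
  have hnext := hV.next_supConst_spec hμ hC
  choose g hg using fun x => hV.exists_lt_const_of_lt_supConst hμ (hnext x).2.2
  have hxg (x : μ.ToType) : (x : Ordinal) < g x :=
    hV.const_lt_const_iff.1 (hV.lt_trans (hnext x).2.1 (hg x))
  let f (δ : Ordinal.{u}) : Ordinal.{u} := if h : δ < μ then g (ToType.mk ⟨δ, h⟩) else δ + 1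
  have hf (δ : Ordinal.{u}) : δ < f δ := by
    by_cases h : δ < μ
    · simpa [f, h] using hxg (ToType.mk ⟨δ, h⟩)
    · simp [f, h]
  have hfμ (δ : Ordinal.{u}) (hδ : δ < μ) : f δ < μ := by
    simp only [f, dif_pos hδ]
    exact (ToType.toOrd _).2
  have hlt := nfp_lt_ord hμ hfμ hγ
  refine ⟨nfp f γ, ⟨hlt, isSuccLimit_nfp hf γ, fun x hx => ?_⟩, iterate_lt_nfp' hf γ 0⟩
  obtain ⟨n, hn⟩ := lt_nfp_iff.1 hx
  have hδ : f^[n] γ < μ := (iterate_lt_nfp' hf γ n).trans hlt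
  let x' : μ.ToType := ToType.mk ⟨f^[n] γ, hδ⟩
  have hgx' : (g x' : Ordinal) = f^[n + 1] γ := by
    rw [Function.iterate_succ_apply']; simp [f, hδ, x']
  refine ⟨_, (hnext x').1, hV.lt_trans (hV.const_lt_const_iff.2 (by simpa [x'] using hn))
    (hnext x').2.1, g x', hgx' ▸ iterate_lt_nfp' hf γ (n + 1), hg x'⟩

theorem mem_isAccPt_lub_supConst (hV : IsDefinableUltrafilter C V) (hβ : β ∈ hV.accSet) :
    V (.isAccPt (hV.lub β) hV.supConst) := by
  obtain ⟨hβμ, hβlim, hacc⟩ := hβ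
  refine hV.mem_isAccPt_lub hβlim hβμ.le fun x hx => ?_
  obtain ⟨t, ht, hxt, y, hy, hty⟩ := hacc x hx
  exact ⟨t, ht, hxt, hV.lt_trans hty (hV.isConstUB_lub β y hy)⟩

theorem mem_isAccPt_lub_const (hV : IsDefinableUltrafilter C V) (hC : IsCoherentClubSeq μ C)
    (hβμ : β < μ) (hβ : IsSuccLimit β) :
    V (.isAccPt (hV.lub β) (.const (ToType.mk ⟨β, hβμ⟩))) := by
  have hclub := hC.isClubIn hβμ hβ
  refine hV.mem_isAccPt_lub hβ hβμ.le fun x hx => ?_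
  obtain ⟨c, hc, hxc⟩ := hclub.2.2 x hx
  let c' : μ.ToType := ToType.mk ⟨c, (hclub.1 hc).trans hβμ⟩
  refine ⟨.const c', hV.mem_of_forall_holds fun i _ => ?_,
    hV.const_lt_const_iff.2 (by simpa [c'] using hxc),
    hV.isConstUB_lub β c' (by simpa [c'] using hclub.1 hc)⟩
  show (c' : Ordinal) ∈ C (ToType.mk ⟨β, hβμ⟩ : μ.ToType)
  simpa [c'] using hc

theorem isAccPt_of_mem_accSet (hV : IsDefinableUltrafilter C V) (hμ : ℵ₀ < μ.cof)
    (hC : IsCoherentClubSeq μ C) {β₁ β₂ : Ordinal.{u}} (h₁ : β₁ ∈ hV.accSet)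
    (h₂ : β₂ ∈ hV.accSet) (h : β₁ < β₂) : IsAccPt β₁ (C β₂) := by
  let z : μ.ToType := ToType.mk ⟨β₂, h₂.1⟩
  have hz : (z : Ordinal) = β₂ := by simp [z]
  have hbe : ¬ V (.lt hV.supConst (hV.lub β₂)) :=
    hV.not_lt_lub fun x hx => hV.isConstUB_supConst hμ x (hx.trans h₂.1)
  have hbz : ¬ V (.lt (.const z) (hV.lub β₂)) :=
    hV.not_lt_lub fun x hx => hV.const_lt_const_iff.2 (hz ▸ hx)
  have hlimz : V (.isLimit (.const z)) :=
    hV.mem_of_forall_holds fun _ _ => (hz.symm ▸ h₂.2.1 : IsSuccLimit (z : Ordinal))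
  refine ⟨(Ordinal.isSuccLimit_iff.1 h₁.2.1).1, fun γ hγ => ?_⟩
  let x : μ.ToType := ToType.mk ⟨γ, hγ.trans h₁.1⟩
  obtain ⟨t, hte, hxt, y, hy, hty⟩ := h₁.2.2 x (by simpa [x] using hγ)
  have htb : V (.lt t (hV.lub β₂)) := hV.lt_trans hty (hV.isConstUB_lub β₂ y (hy.trans h))
  -- `lub β₂` is a virtual accumulation point of both clubs, so coherence carries `t` across
  have htz : V (.mem t (.const z)) :=
    (hV.mem_iff_mem_of_isAccPt hC hlimz hbz (hV.mem_isAccPt_lub_const hC h₂.1 h₂.2.1) htb).1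
      ((hV.mem_iff_mem_of_isAccPt hC (hV.mem_isLimit_supConst hμ) hbe
        (hV.mem_isAccPt_lub_supConst h₂) htb).2 hte)
  obtain ⟨i, -, hi⟩ := hV.exists_holds (hV.mem_and htz (hV.mem_and hxt hty))
  obtain ⟨htz, hxt, hty⟩ : t.eval C i ∈ C z ∧ (x : Ordinal) < t.eval C i ∧ t.eval C i < y := hi
  exact ⟨t.eval C i, hz ▸ htz, by simpa [x] using hxt, hty.trans hy⟩

theorem exists_isThread (hV : IsDefinableUltrafilter C V) (hμ : ℵ₀ < μ.cof)
    (hC : IsCoherentClubSeq μ C) : ∃ D, IsThread μ C D :=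
  ⟨_, hC.isThread_biUnion (fun _ hβ => ⟨hβ.1, hβ.2.1⟩) (fun _ => hV.exists_mem_accSet_gt hμ hC)
    fun _ h₁ _ h₂ h => hV.isAccPt_of_mem_accSet hμ hC h₁ h₂ h⟩

end IsDefinableUltrafilter

/-- Let `κ ≤ lam` be cardinals with `κ` regular and uncountable, `lam ^< κ = lam`, and
suppose `κ` has the `lam`-filter extension property.  Then for every regular cardinal `μ`
with `κ ≤ μ ≤ 2 ^ lam`, the principle `□(μ)` fails. -/
theorem statement9 (κ lam : Cardinal.{u})
    (hreg : κ.IsRegular) (hunc : ℵ₀ < κ) (hka : κ ≤ lam) (hpow : lam ^< κ = lam)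
    (hfe : HasFilterExt κ lam)
    (μ : Cardinal.{u}) (hμreg : μ.IsRegular) (hκμ : κ ≤ μ) (hμ2 : μ ≤ 2 ^ lam) :
    ¬ SquarePrinciple μ.ord := by
  have hcof : κ ≤ μ.ord.cof := hκμ.trans_eq hμreg.cof_ord.symm
  rintro ⟨C, hC, hno⟩
  obtain ⟨V, hV⟩ :=
    exists_isDefinableUltrafilter hreg hunc hka hpow hfe hcof (by simpa using hμ2) C
  exact hno (hV.exists_isThread (hunc.trans_le hcof) hC)
end

section
/- Let κ ≤ λ be cardinals with κ regular and uncountable, λ^{<κ} = λ, and suppose κ has the λ-filter extension property. Let μ be a regular cardinal with κ ≤ μ ≤ 2^λ and let ρ < κ be a cardinal. If G is a graph whose vertex set has cardinality μ and every induced subgraph of G on a vertex set of cardinality less than κ has chromatic number at most ρ, then G has chromatic number at most ρ. -/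
/-!
Identify the vertices with subsets of a set `L` of size `lam`. Because `lam ^< κ = lam`, there
are only `lam` codes `(t, D)` with `t ⊆ L` small and `D` a small table of colours indexed by traces
`a ∩ t`; decoding them gives an `L`-indexed family of colourings of `V` extending every colouring
of every small vertex set, since a small set of distinct subsets of `L` is already separated by
its traces on some small `t`. The sets of indices whose colouring separates a given edge generate
a `κ`-complete filter, proper because fewer than `κ` edges span a small induced subgraph, which
some member of the family colours properly. In a `κ`-complete ultrafilter extending it every
vertex has an eventually constant colour, there being fewer than `κ` colours, and this limit
colouring is proper.
-/

open Cardinal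

/-- A graph `G` has chromatic number at most `ρ`: there is a proper coloring of its
vertices using a set of at most `ρ` colors. -/
def ChromaticNumberLE {V : Type u} (G : SimpleGraph V) (ρ : Cardinal.{u}) : Prop :=
  ∃ (γ : Type u) (_ : #γ ≤ ρ), Nonempty (G.Coloring γ)

universe u

theorem mk_setOf_mk_lt_le {α : Type u} {κ lam : Cardinal.{u}} (hlam : ℵ₀ ≤ lam) (hka : κ ≤ lam)
    (hpow : lam ^< κ = lam) (hα : #α ≤ lam) : #{s : Set α // #s < κ} ≤ lam := by
  have hIio : ∀ j : κ.ord.ToType, #(Set.Iio j) < κ := fun j => by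
    simpa using mk_Iio_lt j (by simp)
  have hcover : ∀ s : Set α, #s < κ → ∃ j : κ.ord.ToType, #s ≤ #(Set.Iio j) := by
    intro s hs
    have ho : (#s).ord < Ordinal.type (α := κ.ord.ToType) (· < ·) := by
      rwa [Ordinal.type_toType, ord_lt_ord]
    have := congrArg Ordinal.card (Ordinal.typein_enum _ ho)
    rw [Ordinal.card_typein, card_ord] at this
    exact ⟨_, this.ge⟩
  calc #{s : Set α // #s < κ}
      ≤ #(Σ j : κ.ord.ToType, {s : Set α // #s ≤ #(Set.Iio j)}) :=
        mk_le_of_surjective (f := fun p => ⟨p.2.1, p.2.2.trans_lt (hIio p.1)⟩) fun s => by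
          obtain ⟨j, hj⟩ := hcover s.1 s.2
          exact ⟨⟨j, s.1, hj⟩, rfl⟩
    _ ≤ sum fun _ : κ.ord.ToType => lam := by
        rw [mk_sigma]
        refine sum_le_sum _ _ fun j => (mk_bounded_set_le α _).trans ?_
        calc max #α ℵ₀ ^ #(Set.Iio j) ≤ lam ^ #(Set.Iio j) :=
              power_le_power_right (max_le hα hlam)
          _ ≤ lam := powerlt_le.mp hpow.le _ (hIio j)
    _ ≤ lam := by
        rw [sum_const', mk_ord_toType]
        exact mul_le_of_le hlam hka le_rfl

theorem exists_small_set_injOn_inter {L : Type u} {κ : Cardinal.{u}} (hκ : ℵ₀ ≤ κ)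
    {S : Set (Set L)} (hS : #S < κ) : ∃ t : Set L, #t < κ ∧ S.InjOn (· ∩ t) := by
  have hsep : ∀ p : {p : S × S // p.1 ≠ p.2}, ∃ x, ¬(x ∈ p.1.1.1 ↔ x ∈ p.1.2.1) := fun p =>
    not_forall.mp fun h => p.2 (Subtype.ext (Set.ext h))
  choose sep hsep using hsep
  refine ⟨Set.range sep, ?_, fun a ha b hb hab => by_contra fun hne => ?_⟩
  · calc #(Set.range sep) ≤ #(S × S) := mk_range_le.trans (mk_subtype_le _)
      _ < κ := by rw [mk_prod, lift_id]; exact mul_lt_of_lt hκ hS hS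
  · set p : {p : S × S // p.1 ≠ p.2} := ⟨(⟨a, ha⟩, ⟨b, hb⟩), fun h => hne congr($h.1)⟩
    have hmem : sep p ∈ Set.range sep := ⟨p, rfl⟩
    exact hsep p (by simpa [hmem] using Set.ext_iff.mp hab (sep p))

/-- A small set `t ⊆ L` together with a small table of colours indexed by traces on `t`. -/
def ColoringCode (κ : Cardinal.{u}) (L R : Type u) : Type u :=
  {t : Set L // #t < κ} × {D : Set ({t : Set L // #t < κ} × R) // #D < κ}

namespace ColoringCode

variable {κ lam : Cardinal.{u}} {V L R : Type u}

theorem mk_le (hlam : ℵ₀ ≤ lam) (hka : κ ≤ lam) (hpow : lam ^< κ = lam) (hL : #L ≤ lam)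
    (hR : #R ≤ lam) : #(ColoringCode κ L R) ≤ lam := by
  have hsmall : #{t : Set L // #t < κ} ≤ lam := mk_setOf_mk_lt_le hlam hka hpow hL
  have hpairs : #({t : Set L // #t < κ} × R) ≤ lam := by
    simpa only [mk_prod, lift_id] using mul_le_of_le hlam hsmall hR
  simpa only [ColoringCode, mk_prod, lift_id] using
    mul_le_of_le hlam hsmall (mk_setOf_mk_lt_le hlam hka hpow hpairs)

def trace (t : {t : Set L // #t < κ}) (a : Set L) : {t : Set L // #t < κ} :=
  ⟨a ∩ t, (mk_le_mk_of_subset Set.inter_subset_right).trans_lt t.2⟩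

open Classical in
noncomputable def decode (e : V → Set L) (r₀ : R) (x : ColoringCode κ L R) (v : V) : R :=
  if h : ∃ r, (trace x.1 (e v), r) ∈ x.2.1 then h.choose else r₀

theorem exists_decode_eq (hκ : ℵ₀ ≤ κ) {e : V → Set L} (he : e.Injective) (r₀ : R)
    {s : Set V} (hs : #s < κ) (c : s → R) :
    ∃ x : ColoringCode κ L R, ∀ v : s, decode e r₀ x v = c v := by
  obtain ⟨t, ht, hinj⟩ :=
    exists_small_set_injOn_inter hκ (mk_image_le.trans_lt hs : #(e '' s) < κ)
  let D : Set ({t : Set L // #t < κ} × R) := Set.range fun v : s => (trace ⟨t, ht⟩ (e v), c v)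
  refine ⟨(⟨t, ht⟩, ⟨D, mk_range_le.trans_lt hs⟩), fun v => ?_⟩
  have hex : ∃ r, (trace ⟨t, ht⟩ (e v), r) ∈ D := ⟨c v, v, rfl⟩
  unfold decode
  rw [dif_pos hex]
  obtain ⟨w, hw⟩ := hex.choose_spec
  have hwv : w = v := Subtype.ext <| he <|
    hinj (Set.mem_image_of_mem e w.2) (Set.mem_image_of_mem e v.2) congr(($hw).1.1)
  subst hwv
  exact congr(($hw).2).symm

end ColoringCode

theorem exists_family_extending_small_maps {κ lam : Cardinal.{u}} {V L R : Type u}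
    (hκ : ℵ₀ ≤ κ) (hka : κ ≤ lam) (hpow : lam ^< κ = lam) (hL : #L = lam) (hV : #V ≤ 2 ^ lam)
    (hR : #R ≤ lam) [Nonempty R] :
    ∃ f : L → V → R, ∀ s : Set V, #s < κ → ∀ c : s → R, ∃ α, ∀ v : s, f α v = c v := by
  obtain ⟨e⟩ := le_def V (Set L) |>.1 (hV.trans_eq (by rw [mk_set, hL]))
  obtain ⟨code⟩ := le_def (ColoringCode κ L R) L |>.1
    ((ColoringCode.mk_le (hκ.trans hka) hka hpow hL.le hR).trans_eq hL.symm)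
  let r₀ : R := Classical.arbitrary R
  have : Nonempty (ColoringCode κ L R) :=
    ⟨(ColoringCode.exists_decode_eq hκ e.injective r₀ (s := ∅)
      (by simpa using aleph0_pos.trans_le hκ) fun _ => r₀).choose⟩
  refine ⟨fun α => ColoringCode.decode e r₀ (Function.invFun code α), fun s hs c => ?_⟩
  obtain ⟨x, hx⟩ := ColoringCode.exists_decode_eq hκ e.injective r₀ hs c
  exact ⟨code x, by simpa only [Function.leftInverse_invFun code.injective x] using hx⟩

open Filter

theorem isKappaComplete_iff_cardinalInterFilter {κ : Cardinal.{u}} {β : Type u} (F : Filter β) :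
    IsKappaComplete κ F ↔ CardinalInterFilter F κ :=
  ⟨fun h => ⟨fun S hS hsub => h S hS hsub⟩,
    fun _ S hS hsub => CardinalInterFilter.cardinal_sInter_mem S hS hsub⟩

theorem Filter.cardinalGenerate_neBot {α : Type u} {c : Cardinal.{u}} (hreg : c.IsRegular)
    {g : Set (Set α)} (h : ∀ S ⊆ g, #S < c → (⋂₀ S).Nonempty) :
    (cardinalGenerate g (hreg.nat_lt 2)).NeBot := by
  refine ⟨fun hbot => ?_⟩
  obtain ⟨S, hSg, hSc, hS⟩ := 
    (mem_cardinalGenerate_iff (s := ∅) (hreg := hreg)).1 (by rw [hbot]; exact mem_bot)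
  obtain ⟨x, hx⟩ := h S hSg hSc
  exact hS hx

theorem Ultrafilter.exists_eventually_eq {κ : Cardinal.{u}} {L R : Type u} (U : Ultrafilter L)
    [CardinalInterFilter (U : Filter L) κ] (hR : #R < κ) (g : L → R) :
    ∃ r, ∀ᶠ α in U, g α = r := by
  by_contra! h
  obtain ⟨α, hα⟩ := ((eventually_cardinal_forall hR).2 h).exists
  exact hα _ rfl

namespace SimpleGraph

variable {κ : Cardinal.{u}} {V L R : Type u} (G : SimpleGraph V)

theorem nonempty_coloring_of_eventually_ne (U : Ultrafilter L)
    [CardinalInterFilter (U : Filter L) κ] (hR : #R < κ) (f : L → V → R)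
    (hf : ∀ v w, G.Adj v w → ∀ᶠ α in U, f α v ≠ f α w) : Nonempty (G.Coloring R) := by
  choose col hcol using fun v => U.exists_eventually_eq hR (f · v)
  refine ⟨Coloring.mk col fun {v w} hvw heq => ?_⟩
  obtain ⟨α, hv, hw, hne⟩ := ((hcol v).and ((hcol w).and (hf v w hvw))).exists
  exact hne (hv.trans (heq.trans hw.symm))

theorem nonempty_coloring_of_forall_small {lam : Cardinal.{u}} (hreg : κ.IsRegular)
    (hfe : HasFilterExt κ lam) (hL : #L = lam) (hR : #R < κ) (f : L → V → R)
    (hf : ∀ s : Set V, #s < κ → ∃ α, ∀ v ∈ s, ∀ w ∈ s, G.Adj v w → f α v ≠ f α w) :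
    Nonempty (G.Coloring R) := by
  let g : Set (Set L) := {A | ∃ v w, G.Adj v w ∧ {α | f α v ≠ f α w} = A}
  have hne : (cardinalGenerate g (hreg.nat_lt 2)).NeBot := by
    refine cardinalGenerate_neBot hreg fun S hSg hS => ?_
    choose v w hvw hA using hSg
    have hsmall : #(⋃ A : S, ({v A.2, w A.2} : Set V)) < κ :=
      (card_iUnion_lt_iff_forall_of_isRegular hreg hS).2 fun _ =>
        (Set.toFinite _).lt_aleph0.trans_le hreg.aleph0_le
    obtain ⟨α, hα⟩ := hf _ hsmall
    refine ⟨α, fun A hAS => hA hAS ▸ hα _ ?_ _ ?_ (hvw hAS)⟩ <;>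
      exact Set.mem_iUnion.2 ⟨⟨A, hAS⟩, by simp⟩
  obtain ⟨U, hUle, hU⟩ := hfe L hL _ hne
    ((isKappaComplete_iff_cardinalInterFilter _).2 (cardinalInter_ofCardinalGenerate _ _))
  have := (isKappaComplete_iff_cardinalInterFilter _).1 hU
  exact G.nonempty_coloring_of_eventually_ne U hR f fun v w hvw =>
    hUle (CardinalGenerateSets.basic ⟨v, w, hvw, rfl⟩)

end SimpleGraph

theorem chromaticNumberLE_iff_nonempty_coloring_out {V : Type u} (G : SimpleGraph V)
    (ρ : Cardinal.{u}) : ChromaticNumberLE G ρ ↔ Nonempty (G.Coloring ρ.out) := by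
  refine ⟨fun ⟨γ, hγ, ⟨C⟩⟩ => ?_, fun ⟨C⟩ => ⟨ρ.out, (mk_out ρ).le, ⟨C⟩⟩⟩
  obtain ⟨emb⟩ := le_def γ ρ.out |>.1 (hγ.trans_eq (mk_out ρ).symm)
  exact ⟨(SimpleGraph.Embedding.completeGraph emb).toHom.comp C⟩

theorem statement12_general (κ lam : Cardinal.{u})
    (hreg : κ.IsRegular) (hka : κ ≤ lam) (hpow : lam ^< κ = lam)
    (hfe : HasFilterExt κ lam)
    (μ : Cardinal.{u}) (hμ2 : μ ≤ 2 ^ lam)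
    (ρ : Cardinal.{u}) (hρ : ρ < κ)
    {V : Type u} (hV : #V = μ) (G : SimpleGraph V)
    (hsub : ∀ s : Set V, #s < κ → ChromaticNumberLE (G.induce s) ρ) :
    ChromaticNumberLE G ρ := by
  have hcol (s : Set V) (hs : #s < κ) :=
    (chromaticNumberLE_iff_nonempty_coloring_out _ ρ).1 (hsub s hs)
  rw [chromaticNumberLE_iff_nonempty_coloring_out]
  rcases isEmpty_or_nonempty V with hempty | ⟨⟨v₀⟩⟩
  · exact ⟨SimpleGraph.Coloring.mk isEmptyElim fun {v} => isEmptyElim v⟩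
  have : Nonempty ρ.out :=
    ⟨(hcol {v₀} ((Set.toFinite _).lt_aleph0.trans_le hreg.aleph0_le)).some ⟨v₀, rfl⟩⟩
  obtain ⟨f, hf⟩ := exists_family_extending_small_maps (L := lam.out) (R := ρ.out)
    hreg.aleph0_le hka hpow (mk_out lam) (hV ▸ hμ2) ((mk_out ρ).trans_le (hρ.le.trans hka))
  refine G.nonempty_coloring_of_forall_small hreg hfe (mk_out lam) ((mk_out ρ).trans_lt hρ) f
    fun s hs => ?_
  obtain ⟨C⟩ := hcol s hs
  obtain ⟨α, hα⟩ := hf s hs C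
  exact ⟨α, fun v hv w hw hvw => by rw [hα ⟨v, hv⟩, hα ⟨w, hw⟩]; exact C.valid hvw⟩

/-- Let `κ ≤ lam` be cardinals with `κ` regular and uncountable, `lam ^< κ = lam`, and
suppose `κ` has the `lam`-filter extension property.  Let `μ` be a regular cardinal with
`κ ≤ μ ≤ 2 ^ lam` and let `ρ < κ` be a cardinal.  If `G` is a graph on `μ` vertices all
of whose induced subgraphs on fewer than `κ` vertices have chromatic number at most `ρ`,
then `G` has chromatic number at most `ρ`. -/
theorem statement12 (κ lam : Cardinal.{u})
    (hreg : κ.IsRegular) (hunc : ℵ₀ < κ) (hka : κ ≤ lam) (hpow : lam ^< κ = lam)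
    (hfe : HasFilterExt κ lam)
    (μ : Cardinal.{u}) (hμreg : μ.IsRegular) (hκμ : κ ≤ μ) (hμ2 : μ ≤ 2 ^ lam)
    (ρ : Cardinal.{u}) (hρ : ρ < κ)
    {V : Type u} (hV : #V = μ) (G : SimpleGraph V)
    (hsub : ∀ s : Set V, #s < κ → ChromaticNumberLE (G.induce s) ρ) :
    ChromaticNumberLE G ρ :=
  statement12_general κ lam hreg hka hpow hfe μ hμ2 ρ hρ hV G hsub
end
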